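/- arXiv:2210.03357 — 2 statements merged into one kernel-verified Lean document; each statement's English description precedes it below -/
import Mathlib

section
/- Solution to the DSO problem (Proposition 1 of the paper). Define the explicit DSO candidate: T_{i,k} = (Σ_{l≤k} Q_{i,l})/(μ_i − μ_{i+1}) (with T_{i,0} = 0, 𝒯_{i,0} = ∅), 𝒯_{i,k} = Γ(T_{i,k}) with common endpoint cost c̄(T_{i,k}); ρ^SO_{i,k} = Σ_{l≥k} (β^l − β^{l+1}) c̄(T_{i,l}) + d_i (with β^{K+1} = 0); q^SO_{i,k}(t) = μ_i − μ_{i+1} for t ∈ 𝒯_{i,k}∖𝒯_{i,k−1} and 0 otherwise; p^SO_i(t) = ρ^SO_{i,k} − β^k c(t) − d_i − Σ_{j<i} p^SO_j(t) for t ∈ 𝒯_{i,k}∖𝒯_{i,k−1} and p^SO_i(t) = 0 for t ∉ 𝒯_{i,K}. Assume the windows are spatially nested, T_{i,K} < T_{i+1,K} for all i ∈ {1,…,N−1}, and that p^SO_i(t) > 0 for every t in the interior of 𝒯_{i,K} and every i (Assumption 1 for the candidate). Then (q^SO, p^SO, ρ^SO) satisfies the KKT conditions (i)–(iii) of the DSO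 linear program, i.e. it is a DSO solution. -/
open MeasureTheory Finset Set

/-!
The windows `𝒯_{i,k} = [tm i k, tp i k]` are sublevel sets of the quasi-convex cost `c`, so a
longer window strictly contains a shorter one; hence the windows are nested both in the group
index `k` and, because `T_{i,K} < T_{i+1,K}`, in the bottleneck index `i`. For a time `t` let `m`
be the first group whose window at bottleneck `i` contains `t`. The price recursion telescopes to
`∑_{j ≤ i} p_j(t) = ∑_{l ≥ m} (β^l - β^{l+1}) (c̄_{i,l} - c(t))`, so the reduced cost of group `k`
is `g k - g m` with `g k = ∑_{l ≥ k} (β^l - β^{l+1}) (c(t) - c̄_{i,l})`. The summands of `g` are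
nonnegative for `l < m` and nonpositive for `l ≥ m`, so `g` is minimal at `m`: this is KKT (i).
The flows of bottleneck `j` fill `𝒯_{j,K}` at rate `μ_j - μ_{j+1}`, so the total flow through
bottleneck `i` telescopes to `μ_i` on `𝒯_{i,K}` and is at most `μ_i` elsewhere; together with
`p_i ≥ 0` (Assumption 1 inside the window, `c = c̄_{i,K}` at its endpoints) this is KKT (ii).
KKT (iii) is the length `Q_{i,k} / (μ_i - μ_{i+1})` of `𝒯_{i,k} \ 𝒯_{i,k-1}`.
-/

section CostFunction

variable {c : ℝ → ℝ} {a b t : ℝ}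

theorem neg_and_pos_of_cost_eq (hdec : StrictAntiOn c (Set.Iic 0))
    (hinc : StrictMonoOn c (Set.Ici 0)) (hab : a < b) (hc : c a = c b) : a < 0 ∧ 0 < b := by
  constructor
  · by_contra! ha
    exact (hinc ha (ha.trans hab.le) hab).ne hc
  · by_contra! hb
    exact (hdec (hab.le.trans hb) hb hab).ne' hc

theorem cost_le_of_mem_Icc (hdec : StrictAntiOn c (Set.Iic 0))
    (hinc : StrictMonoOn c (Set.Ici 0)) (ht : t ∈ Set.Icc a b) (hc : c a = c b) :
    c t ≤ c b := by
  rcases le_total t 0 with h | h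
  · exact hc ▸ hdec.antitoneOn (ht.1.trans h) h ht.1
  · exact hinc.monotoneOn h (h.trans ht.2) ht.2

theorem cost_lt_of_notMem_Icc (hdec : StrictAntiOn c (Set.Iic 0))
    (hinc : StrictMonoOn c (Set.Ici 0)) (ha : a ≤ 0) (hb : 0 ≤ b) (ht : t ∉ Set.Icc a b)
    (hc : c a = c b) : c b < c t := by
  rw [Set.mem_Icc, not_and_or, not_le, not_le] at ht
  rcases ht with h | h
  · exact hc ▸ hdec (h.le.trans ha) ha h
  · exact hinc hb (hb.trans h.le) h

theorem Icc_subset_Ioo_of_cost_eq (hdec : StrictAntiOn c (Set.Iic 0))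
    (hinc : StrictMonoOn c (Set.Ici 0)) {a₁ b₁ a₂ b₂ : ℝ} (h₁ : a₁ < b₁) (hc₁ : c a₁ = c b₁)
    (hc₂ : c a₂ = c b₂) (hlen : b₁ - a₁ < b₂ - a₂) : Set.Icc a₁ b₁ ⊆ Set.Ioo a₂ b₂ := by
  obtain ⟨ha₁, hb₁⟩ := neg_and_pos_of_cost_eq hdec hinc h₁ hc₁
  obtain ⟨ha₂, hb₂⟩ := neg_and_pos_of_cost_eq hdec hinc (by linarith) hc₂
  -- equal endpoint costs force the two endpoints to move outwards together
  have hiff : a₂ < a₁ ↔ b₁ < b₂ := by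
    rw [← hdec.lt_iff_gt ha₁.le ha₂.le, ← hinc.lt_iff_lt hb₁.le hb₂.le, hc₁, hc₂]
  rcases lt_or_ge a₂ a₁ with h | h
  · exact Set.Icc_subset_Ioo h (hiff.mp h)
  · have : b₂ ≤ b₁ := not_lt.mp (mt hiff.mpr h.not_gt)
    exact absurd hlen (by linarith)

end CostFunction

theorem sum_Ico_sub_add_one {M : Type*} [AddCommGroup M] (f : ℕ → M) {m n : ℕ} (h : m ≤ n) :
    ∑ l ∈ Finset.Ico m n, (f l - f (l + 1)) = f m - f n := by
  rw [← neg_sub (f n), ← Finset.sum_Ico_sub f h, ← Finset.sum_neg_distrib]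
  simp only [neg_sub]

theorem sum_Icc_one_eq_sum_Icc_one_sub_add {M : Type*} [AddCommMonoid M] (f : ℕ → M) {i : ℕ}
    (hi : 1 ≤ i) : ∑ j ∈ Finset.Icc 1 i, f j = ∑ j ∈ Finset.Icc 1 (i - 1), f j + f i := by
  obtain ⟨i, rfl⟩ := Nat.exists_eq_add_of_le' hi
  simpa using Finset.sum_Icc_succ_top (Nat.le_add_left 1 i) f

theorem sum_Ico_le_sum_Ico_of_sign_change {M : Type*} [AddCommMonoid M] [PartialOrder M]
    [IsOrderedAddMonoid M] (f : ℕ → M) {k m n : ℕ} (hk : k ≤ n) (hm : m ≤ n)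
    (hpos : ∀ l ∈ Finset.Ico k m, 0 ≤ f l) (hneg : ∀ l ∈ Finset.Ico m k, f l ≤ 0) :
    ∑ l ∈ Finset.Ico m n, f l ≤ ∑ l ∈ Finset.Ico k n, f l := by
  rcases le_total k m with h | h
  · rw [← Finset.sum_Ico_consecutive f h hm]
    exact le_add_of_nonneg_left (Finset.sum_nonneg hpos)
  · rw [← Finset.sum_Ico_consecutive f h hk]
    exact add_le_of_nonpos_left (Finset.sum_nonpos hneg)

theorem sub_add_one_pos_of_lt_of_eq_zero {f : ℕ → ℝ} {n : ℕ}
    (hdec : ∀ i, 1 ≤ i → i < n → f (i + 1) < f i) (hpos : ∀ i ∈ Finset.Icc 1 n, 0 < f i)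
    (htop : f (n + 1) = 0) : ∀ i ∈ Finset.Icc 1 n, 0 < f i - f (i + 1) := by
  intro i hi
  obtain ⟨hi1, hin⟩ := Finset.mem_Icc.mp hi
  rcases hin.lt_or_eq with h | rfl
  · linarith [hdec i hi1 h]
  · linarith [hpos i hi]

theorem MonotoneOn.exists_forall_mem_iff_le {α : Type*} {W : ℕ → Set α} {K : ℕ}
    (hW : MonotoneOn W (Set.Iic K)) (h0 : W 0 = ∅) (t : α) :
    ∃ m, 1 ≤ m ∧ m ≤ K + 1 ∧ ∀ k ≤ K, t ∈ W k ↔ m ≤ k := by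
  classical
  by_cases ht : t ∈ W K
  · have hex : ∃ k, t ∈ W k := ⟨K, ht⟩
    have hmK : Nat.find hex ≤ K := Nat.find_min' hex ht
    refine ⟨Nat.find hex, Nat.one_le_iff_ne_zero.mpr fun h => ?_, by omega,
      fun k hk => ⟨fun h => Nat.find_min' hex h, fun h => hW hmK hk h (Nat.find_spec hex)⟩⟩
    simpa [h, h0] using Nat.find_spec hex
  · exact ⟨K + 1, by omega, le_rfl, fun k hk =>
      ⟨fun h => absurd (hW hk Set.self_mem_Iic hk h) ht, fun h => by omega⟩⟩

theorem mem_sdiff_pred_iff_eq {α : Type*} {W : ℕ → Set α} {K m k : ℕ} {t : α}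
    (hm : ∀ k ≤ K, t ∈ W k ↔ m ≤ k) (hm1 : 1 ≤ m) (hk : k ∈ Finset.Icc 1 K) :
    t ∈ W k \ W (k - 1) ↔ k = m := by
  obtain ⟨hk1, hkK⟩ := Finset.mem_Icc.mp hk
  rw [Set.mem_sdiff, hm k hkK, hm (k - 1) (by omega)]
  omega

/-- `(q, p, ρ)` is the candidate `(q^SO, p^SO, ρ^SO)` built on the windows
`W i k = 𝒯_{i,k} = [tm i k, tp i k]` with endpoint cost `cbar i k = c̄(T_{i,k})`. -/
structure IsDSOCandidate (N K : ℕ) (c : ℝ → ℝ) (β μ d : ℕ → ℝ) (Q tm tp cbar : ℕ → ℕ → ℝ)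
    (W : ℕ → ℕ → Set ℝ) (ρ : ℕ → ℕ → ℝ) (q : ℕ → ℕ → ℝ → ℝ) (p : ℕ → ℝ → ℝ) : Prop where
  one_le_K : 1 ≤ K
  cost_anti : StrictAntiOn c (Set.Iic 0)
  cost_mono : StrictMonoOn c (Set.Ici 0)
  beta_sub_nonneg : ∀ l ∈ Finset.Icc 1 K, 0 ≤ β l - β (l + 1)
  beta_top : β (K + 1) = 0
  gap_pos : ∀ i ∈ Finset.Icc 1 N, 0 < μ i - μ (i + 1)
  mu_top : μ (N + 1) = 0
  demand_pos : ∀ i ∈ Finset.Icc 1 N, ∀ k ∈ Finset.Icc 1 K, 0 < Q i k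
  length_eq : ∀ i ∈ Finset.Icc 1 N, ∀ k ∈ Finset.Icc 1 K,
    tp i k - tm i k = (∑ l ∈ Finset.Icc 1 k, Q i l) / (μ i - μ (i + 1))
  cost_tm : ∀ i ∈ Finset.Icc 1 N, ∀ k ∈ Finset.Icc 1 K, c (tm i k) = cbar i k
  cost_tp : ∀ i ∈ Finset.Icc 1 N, ∀ k ∈ Finset.Icc 1 K, c (tp i k) = cbar i k
  window_zero : ∀ i, W i 0 = ∅
  window_eq : ∀ i ∈ Finset.Icc 1 N, ∀ k ∈ Finset.Icc 1 K, W i k = Set.Icc (tm i k) (tp i k)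
  length_lt : ∀ i, 1 ≤ i → i < N → tp i K - tm i K < tp (i + 1) K - tm (i + 1) K
  rho_eq : ∀ i ∈ Finset.Icc 1 N, ∀ k ∈ Finset.Icc 1 K,
    ρ i k = (∑ l ∈ Finset.Icc k K, (β l - β (l + 1)) * cbar i l) + d i
  flow_eq : ∀ i ∈ Finset.Icc 1 N, ∀ k ∈ Finset.Icc 1 K, ∀ t ∈ W i k \ W i (k - 1),
    q i k t = μ i - μ (i + 1)
  flow_eq_zero : ∀ i ∈ Finset.Icc 1 N, ∀ k ∈ Finset.Icc 1 K, ∀ t,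
    t ∉ W i k \ W i (k - 1) → q i k t = 0
  price_eq : ∀ i ∈ Finset.Icc 1 N, ∀ k ∈ Finset.Icc 1 K, ∀ t ∈ W i k \ W i (k - 1),
    p i t = ρ i k - β k * c t - d i - ∑ j ∈ Finset.Icc 1 (i - 1), p j t
  price_eq_zero : ∀ i ∈ Finset.Icc 1 N, ∀ t ∉ W i K, p i t = 0
  price_pos : ∀ i ∈ Finset.Icc 1 N, ∀ t ∈ Set.Ioo (tm i K) (tp i K), 0 < p i t

namespace IsDSOCandidate

variable {N K : ℕ} {c : ℝ → ℝ} {β μ d : ℕ → ℝ} {Q tm tp cbar : ℕ → ℕ → ℝ}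
  {W : ℕ → ℕ → Set ℝ} {ρ : ℕ → ℕ → ℝ} {q : ℕ → ℕ → ℝ → ℝ} {p : ℕ → ℝ → ℝ}
  (h : IsDSOCandidate N K c β μ d Q tm tp cbar W ρ q p) {i j k m : ℕ} {t : ℝ}

include h

theorem K_mem_Icc : K ∈ Finset.Icc 1 K := Finset.mem_Icc.mpr ⟨h.one_le_K, le_rfl⟩

theorem length_pos (hi : i ∈ Finset.Icc 1 N) (hk : k ∈ Finset.Icc 1 K) :
    0 < tp i k - tm i k := by
  rw [h.length_eq i hi k hk]
  refine div_pos (Finset.sum_pos (fun l hl => h.demand_pos i hi l ?_) ⟨k, ?_⟩) (h.gap_pos i hi)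
  · exact Finset.Icc_subset_Icc_right (Finset.mem_Icc.mp hk).2 hl
  · exact Finset.mem_Icc.mpr ⟨(Finset.mem_Icc.mp hk).1, le_rfl⟩

theorem cost_tm_eq_cost_tp (hi : i ∈ Finset.Icc 1 N) (hk : k ∈ Finset.Icc 1 K) :
    c (tm i k) = c (tp i k) := by
  rw [h.cost_tm i hi k hk, h.cost_tp i hi k hk]

theorem cost_le_cbar (hi : i ∈ Finset.Icc 1 N) (hk : k ∈ Finset.Icc 1 K) (ht : t ∈ W i k) :
    c t ≤ cbar i k := by
  rw [h.window_eq i hi k hk] at ht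
  exact h.cost_tp i hi k hk ▸
    cost_le_of_mem_Icc h.cost_anti h.cost_mono ht (h.cost_tm_eq_cost_tp hi hk)

theorem cbar_lt_cost (hi : i ∈ Finset.Icc 1 N) (hk : k ∈ Finset.Icc 1 K) (ht : t ∉ W i k) :
    cbar i k < c t := by
  obtain ⟨htm, htp⟩ := neg_and_pos_of_cost_eq h.cost_anti h.cost_mono
    (sub_pos.mp (h.length_pos hi hk)) (h.cost_tm_eq_cost_tp hi hk)
  rw [h.window_eq i hi k hk] at ht
  exact h.cost_tp i hi k hk ▸ cost_lt_of_notMem_Icc h.cost_anti h.cost_mono htm.le htp.le ht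
    (h.cost_tm_eq_cost_tp hi hk)

theorem window_subset_Ioo_of_length_lt {i' k' : ℕ} (hi : i ∈ Finset.Icc 1 N)
    (hk : k ∈ Finset.Icc 1 K) (hi' : i' ∈ Finset.Icc 1 N) (hk' : k' ∈ Finset.Icc 1 K)
    (hlen : tp i k - tm i k < tp i' k' - tm i' k') : W i k ⊆ Set.Ioo (tm i' k') (tp i' k') := by
  rw [h.window_eq i hi k hk]
  exact Icc_subset_Ioo_of_cost_eq h.cost_anti h.cost_mono (sub_pos.mp (h.length_pos hi hk))
    (h.cost_tm_eq_cost_tp hi hk) (h.cost_tm_eq_cost_tp hi' hk') hlen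

theorem strictMonoOn_length_group (hi : i ∈ Finset.Icc 1 N) :
    StrictMonoOn (fun k => tp i k - tm i k) (Set.Icc 1 K) := by
  refine strictMonoOn_of_lt_add_one Set.ordConnected_Icc fun k _ hk hk1 => ?_
  rw [h.length_eq i hi k (Finset.mem_Icc.mpr hk), h.length_eq i hi (k + 1) (Finset.mem_Icc.mpr hk1),
    Finset.sum_Icc_succ_top (by omega)]
  exact div_lt_div_of_pos_right
    (lt_add_of_pos_right _ (h.demand_pos i hi (k + 1) (Finset.mem_Icc.mpr hk1))) (h.gap_pos i hi)

theorem strictMonoOn_length_bottleneck :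
    StrictMonoOn (fun i => tp i K - tm i K) (Set.Icc 1 N) :=
  strictMonoOn_of_lt_add_one Set.ordConnected_Icc fun i _ hi hi1 =>
    h.length_lt i hi.1 (by linarith [hi1.2])

theorem monotoneOn_window (hi : i ∈ Finset.Icc 1 N) : MonotoneOn (W i) (Set.Iic K) := by
  intro k hk k' hk' hkk'
  rcases Nat.eq_zero_or_pos k with rfl | hk0
  · simp [h.window_zero]
  rcases hkk'.eq_or_lt with rfl | hlt
  · exact le_rfl
  have hkmem : k ∈ Set.Icc 1 K := ⟨hk0, hk⟩
  have hk'mem : k' ∈ Set.Icc 1 K := ⟨by omega, hk'⟩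
  rw [h.window_eq i hi k' (Finset.mem_Icc.mpr hk'mem)]
  exact (h.window_subset_Ioo_of_length_lt hi (Finset.mem_Icc.mpr hkmem) hi
    (Finset.mem_Icc.mpr hk'mem) (h.strictMonoOn_length_group hi hkmem hk'mem hlt)).trans
    Set.Ioo_subset_Icc_self

theorem window_subset_Ioo_of_lt (hj : 1 ≤ j) (hji : j < i) (hi : i ∈ Finset.Icc 1 N) :
    W j K ⊆ Set.Ioo (tm i K) (tp i K) := by
  have hjmem : j ∈ Set.Icc 1 N := ⟨hj, by linarith [(Finset.mem_Icc.mp hi).2]⟩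
  exact h.window_subset_Ioo_of_length_lt (Finset.mem_Icc.mpr hjmem) h.K_mem_Icc hi h.K_mem_Icc
    (h.strictMonoOn_length_bottleneck hjmem (Finset.mem_Icc.mp hi) hji)

theorem window_subset_of_le (hj : 1 ≤ j) (hji : j ≤ i) (hi : i ∈ Finset.Icc 1 N) :
    W j K ⊆ W i K := by
  rcases hji.eq_or_lt with rfl | hlt
  · exact le_rfl
  rw [h.window_eq i hi K h.K_mem_Icc]
  exact (h.window_subset_Ioo_of_lt hj hlt hi).trans Set.Ioo_subset_Icc_self

theorem sum_flow_eq_indicator (hj : j ∈ Finset.Icc 1 N) (t : ℝ) :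
    ∑ k ∈ Finset.Icc 1 K, q j k t = (W j K).indicator (fun _ => μ j - μ (j + 1)) t := by
  obtain ⟨m, hm1, -, hm⟩ := (h.monotoneOn_window hj).exists_forall_mem_iff_le (h.window_zero j) t
  have hq : ∀ k ∈ Finset.Icc 1 K, q j k t = if m = k then μ j - μ (j + 1) else 0 := by
    intro k hk
    split_ifs with hmk
    · exact h.flow_eq j hj k hk t ((mem_sdiff_pred_iff_eq hm hm1 hk).mpr hmk.symm)
    · exact h.flow_eq_zero j hj k hk t fun ht => hmk ((mem_sdiff_pred_iff_eq hm hm1 hk).mp ht).symm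
  have hmem : m ∈ Finset.Icc 1 K ↔ t ∈ W j K := by
    rw [Finset.mem_Icc, hm K le_rfl]
    omega
  rw [Finset.sum_congr rfl hq, Finset.sum_ite_eq]
  by_cases ht : t ∈ W j K
  · rw [if_pos (hmem.mpr ht), Set.indicator_of_mem ht]
  · rw [if_neg (mt hmem.mp ht), Set.indicator_of_notMem ht]

theorem sum_capacity_gap_eq (hi : i ∈ Finset.Icc 1 N) :
    ∑ j ∈ Finset.Icc i N, (μ j - μ (j + 1)) = μ i := by
  have hiN := (Finset.mem_Icc.mp hi).2
  rw [← Finset.Ico_add_one_right_eq_Icc, sum_Ico_sub_add_one μ (by omega), h.mu_top, sub_zero]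

theorem total_flow_le_capacity (hi : i ∈ Finset.Icc 1 N) (t : ℝ) :
    ∑ j ∈ Finset.Icc i N, ∑ k ∈ Finset.Icc 1 K, q j k t ≤ μ i := by
  have hsub : Finset.Icc i N ⊆ Finset.Icc 1 N := Finset.Icc_subset_Icc_left (Finset.mem_Icc.mp hi).1
  calc ∑ j ∈ Finset.Icc i N, ∑ k ∈ Finset.Icc 1 K, q j k t
      = ∑ j ∈ Finset.Icc i N, (W j K).indicator (fun _ => μ j - μ (j + 1)) t :=
        Finset.sum_congr rfl fun j hj => h.sum_flow_eq_indicator (hsub hj) t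
    _ ≤ ∑ j ∈ Finset.Icc i N, (μ j - μ (j + 1)) :=
        Finset.sum_le_sum fun j hj =>
          Set.indicator_le_self' (fun _ _ => (h.gap_pos j (hsub hj)).le) t
    _ = μ i := h.sum_capacity_gap_eq hi

theorem total_flow_eq_capacity (hi : i ∈ Finset.Icc 1 N) (ht : t ∈ W i K) :
    ∑ j ∈ Finset.Icc i N, ∑ k ∈ Finset.Icc 1 K, q j k t = μ i := by
  rw [← h.sum_capacity_gap_eq hi]
  refine Finset.sum_congr rfl fun j hj => ?_
  obtain ⟨hij, hjN⟩ := Finset.mem_Icc.mp hj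
  have hj' : j ∈ Finset.Icc 1 N := Finset.mem_Icc.mpr ⟨(Finset.mem_Icc.mp hi).1.trans hij, hjN⟩
  rw [h.sum_flow_eq_indicator hj' t,
    Set.indicator_of_mem (h.window_subset_of_le (Finset.mem_Icc.mp hi).1 hij hj' ht)]

theorem sum_beta_sub (hk : k ≤ K + 1) :
    ∑ l ∈ Finset.Ico k (K + 1), (β l - β (l + 1)) = β k := by
  rw [sum_Ico_sub_add_one β hk, h.beta_top, sub_zero]

theorem sum_price_eq (hi : i ∈ Finset.Icc 1 N) (hm1 : 1 ≤ m) (hm : ∀ k ≤ K, t ∈ W i k ↔ m ≤ k) :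
    ∑ j ∈ Finset.Icc 1 i, p j t =
      ∑ l ∈ Finset.Ico m (K + 1), (β l - β (l + 1)) * (cbar i l - c t) := by
  rcases le_or_gt m K with hmK | hmK
  · have hmem : m ∈ Finset.Icc 1 K := Finset.mem_Icc.mpr ⟨hm1, hmK⟩
    rw [sum_Icc_one_eq_sum_Icc_one_sub_add _ (Finset.mem_Icc.mp hi).1,
      h.price_eq i hi m hmem t ((mem_sdiff_pred_iff_eq hm hm1 hmem).mpr rfl), h.rho_eq i hi m hmem,
      ← Finset.Ico_add_one_right_eq_Icc m K, ← h.sum_beta_sub (k := m) (by omega)]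
    simp only [mul_sub, sub_mul, Finset.sum_sub_distrib, Finset.sum_mul]
    ring
  · have ht : t ∉ W i K := fun ht => by have := (hm K le_rfl).mp ht; omega
    rw [Finset.Ico_eq_empty (by omega), Finset.sum_empty]
    refine Finset.sum_eq_zero fun j hj => ?_
    obtain ⟨hj1, hji⟩ := Finset.mem_Icc.mp hj
    exact h.price_eq_zero j (Finset.mem_Icc.mpr ⟨hj1, hji.trans (Finset.mem_Icc.mp hi).2⟩) t
      fun htj => ht (h.window_subset_of_le hj1 hji hi htj)

theorem reduced_cost_nonneg (hi : i ∈ Finset.Icc 1 N) (hk : k ∈ Finset.Icc 1 K) (t : ℝ) :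
    0 ≤ β k * c t + (∑ j ∈ Finset.Icc 1 i, p j t) + d i - ρ i k := by
  obtain ⟨m, hm1, hmK, hm⟩ := (h.monotoneOn_window hi).exists_forall_mem_iff_le (h.window_zero i) t
  obtain ⟨hk1, hkK⟩ := Finset.mem_Icc.mp hk
  set f : ℕ → ℝ := fun l => (β l - β (l + 1)) * (c t - cbar i l)
  have hcost : β k * c t + (∑ j ∈ Finset.Icc 1 i, p j t) + d i - ρ i k
      = ∑ l ∈ Finset.Ico k (K + 1), f l - ∑ l ∈ Finset.Ico m (K + 1), f l := by
    rw [h.sum_price_eq hi hm1 hm, h.rho_eq i hi k hk, ← Finset.Ico_add_one_right_eq_Icc k K,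
      ← h.sum_beta_sub (k := k) (by omega)]
    simp only [f, mul_sub, sub_mul, Finset.sum_sub_distrib, Finset.sum_mul]
    ring
  rw [hcost, sub_nonneg]
  -- the summands of `f` are `≥ 0` before the first window containing `t` and `≤ 0` from it on
  refine sum_Ico_le_sum_Ico_of_sign_change f (by omega) hmK (fun l hl => ?_) (fun l hl => ?_)
  all_goals
    obtain ⟨hl1, hl2⟩ := Finset.mem_Ico.mp hl
    have hl : l ∈ Finset.Icc 1 K := Finset.mem_Icc.mpr ⟨by omega, by omega⟩
  · have hnot : t ∉ W i l := fun ht => by have := (hm l (by omega)).mp ht; omega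
    exact mul_nonneg (h.beta_sub_nonneg l hl) (sub_nonneg.mpr (h.cbar_lt_cost hi hl hnot).le)
  · exact mul_nonpos_of_nonneg_of_nonpos (h.beta_sub_nonneg l hl)
      (sub_nonpos.mpr (h.cost_le_cbar hi hl ((hm l (by omega)).mpr hl1)))

theorem reduced_cost_eq_zero (hi : i ∈ Finset.Icc 1 N) (hk : k ∈ Finset.Icc 1 K)
    (ht : t ∈ W i k \ W i (k - 1)) :
    β k * c t + (∑ j ∈ Finset.Icc 1 i, p j t) + d i - ρ i k = 0 := by
  rw [sum_Icc_one_eq_sum_Icc_one_sub_add _ (Finset.mem_Icc.mp hi).1, h.price_eq i hi k hk t ht]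
  ring

theorem kkt_flow (hi : i ∈ Finset.Icc 1 N) (hk : k ∈ Finset.Icc 1 K) (t : ℝ) :
    0 ≤ q i k t ∧
    0 ≤ β k * c t + (∑ j ∈ Finset.Icc 1 i, p j t) + d i - ρ i k ∧
    q i k t * (β k * c t + (∑ j ∈ Finset.Icc 1 i, p j t) + d i - ρ i k) = 0 := by
  by_cases ht : t ∈ W i k \ W i (k - 1)
  · rw [h.flow_eq i hi k hk t ht, h.reduced_cost_eq_zero hi hk ht]
    exact ⟨(h.gap_pos i hi).le, le_rfl, mul_zero _⟩
  · rw [h.flow_eq_zero i hi k hk t ht]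
    exact ⟨le_rfl, h.reduced_cost_nonneg hi hk t, zero_mul _⟩

theorem price_eq_zero_of_notMem_Ioo (hi : i ∈ Finset.Icc 1 N) (ht : t ∈ W i K)
    (ht' : t ∉ Set.Ioo (tm i K) (tp i K)) : p i t = 0 := by
  have hK := h.K_mem_Icc
  have hct : c t = cbar i K := by
    rw [h.window_eq i hi K hK] at ht
    have hmem : t ∈ Set.Icc (tm i K) (tp i K) \ Set.Ioo (tm i K) (tp i K) := ⟨ht, ht'⟩
    rw [Set.Icc_sdiff_Ioo_same (sub_nonneg.mp (h.length_pos hi hK).le)] at hmem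
    rcases hmem with rfl | rfl
    exacts [h.cost_tm i hi K hK, h.cost_tp i hi K hK]
  have hprev : t ∉ W i (K - 1) := by
    rcases Nat.eq_zero_or_pos (K - 1) with h0 | hpos
    · simp [h0, h.window_zero]
    have hmem : K - 1 ∈ Set.Icc 1 K := ⟨hpos, by omega⟩
    exact fun htK => ht' (h.window_subset_Ioo_of_length_lt hi (Finset.mem_Icc.mpr hmem) hi hK
      (h.strictMonoOn_length_group hi hmem (Finset.mem_Icc.mp hK) (by omega)) htK)
  have hsum : ∑ j ∈ Finset.Icc 1 (i - 1), p j t = 0 := by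
    refine Finset.sum_eq_zero fun j hj => ?_
    obtain ⟨hj1, hji⟩ := Finset.mem_Icc.mp hj
    have hlt : j < i := by have := (Finset.mem_Icc.mp hi).1; omega
    exact h.price_eq_zero j (Finset.mem_Icc.mpr ⟨hj1, hlt.le.trans (Finset.mem_Icc.mp hi).2⟩) t
      fun htj => ht' (h.window_subset_Ioo_of_lt hj1 hlt hi htj)
  rw [h.price_eq i hi K hK t ⟨ht, hprev⟩, h.rho_eq i hi K hK, Finset.Icc_self,
    Finset.sum_singleton, h.beta_top, hsum, hct]
  ring

theorem price_nonneg (hi : i ∈ Finset.Icc 1 N) (t : ℝ) : 0 ≤ p i t := by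
  by_cases ht : t ∈ W i K
  · by_cases ht' : t ∈ Set.Ioo (tm i K) (tp i K)
    · exact (h.price_pos i hi t ht').le
    · exact (h.price_eq_zero_of_notMem_Ioo hi ht ht').ge
  · exact (h.price_eq_zero i hi t ht).ge

theorem kkt_price (hi : i ∈ Finset.Icc 1 N) (t : ℝ) :
    0 ≤ p i t ∧
    0 ≤ μ i - ∑ j ∈ Finset.Icc i N, ∑ k ∈ Finset.Icc 1 K, q j k t ∧
    p i t * (μ i - ∑ j ∈ Finset.Icc i N, ∑ k ∈ Finset.Icc 1 K, q j k t) = 0 := by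
  refine ⟨h.price_nonneg hi t, sub_nonneg.mpr (h.total_flow_le_capacity hi t), ?_⟩
  by_cases ht : t ∈ W i K
  · rw [h.total_flow_eq_capacity hi ht, sub_self, mul_zero]
  · rw [h.price_eq_zero i hi t ht, zero_mul]

theorem volume_window (hi : i ∈ Finset.Icc 1 N) (hk : k ≤ K) :
    volume (W i k) = ENNReal.ofReal ((∑ l ∈ Finset.Icc 1 k, Q i l) / (μ i - μ (i + 1))) := by
  rcases Nat.eq_zero_or_pos k with rfl | hk0
  · simp [h.window_zero]
  have hkmem : k ∈ Finset.Icc 1 K := Finset.mem_Icc.mpr ⟨hk0, hk⟩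
  rw [h.window_eq i hi k hkmem, Real.volume_Icc, h.length_eq i hi k hkmem]

theorem measurableSet_window (hi : i ∈ Finset.Icc 1 N) (hk : k ≤ K) : MeasurableSet (W i k) := by
  rcases Nat.eq_zero_or_pos k with rfl | hk0
  · simp [h.window_zero]
  rw [h.window_eq i hi k (Finset.mem_Icc.mpr ⟨hk0, hk⟩)]
  exact measurableSet_Icc

theorem volume_window_sdiff (hi : i ∈ Finset.Icc 1 N) (hk : k ∈ Finset.Icc 1 K) :
    volume (W i k \ W i (k - 1)) = ENNReal.ofReal (Q i k / (μ i - μ (i + 1))) := by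
  obtain ⟨hk1, hkK⟩ := Finset.mem_Icc.mp hk
  have hprev : k - 1 ≤ K := by omega
  rw [measure_sdiff (h.monotoneOn_window hi hprev hkK (by omega))
      (h.measurableSet_window hi hprev).nullMeasurableSet
      (by rw [h.volume_window hi hprev]; exact ENNReal.ofReal_ne_top),
    h.volume_window hi hkK, h.volume_window hi hprev,
    ← ENNReal.ofReal_sub _ (div_nonneg (Finset.sum_nonneg fun l hl => (h.demand_pos i hi l
      (Finset.Icc_subset_Icc_right hprev hl)).le) (h.gap_pos i hi).le),
    ← sub_div, sum_Icc_one_eq_sum_Icc_one_sub_add _ hk1, add_sub_cancel_left]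

theorem integral_flow_eq (hi : i ∈ Finset.Icc 1 N) (hk : k ∈ Finset.Icc 1 K) {𝒯 : Set ℝ}
    (hT : W i K ⊆ 𝒯) : ∫ t in 𝒯, q i k t = Q i k := by
  obtain ⟨hk1, hkK⟩ := Finset.mem_Icc.mp hk
  have hD : W i k \ W i (k - 1) ⊆ 𝒯 :=
    Set.sdiff_subset.trans ((h.monotoneOn_window hi hkK Set.self_mem_Iic hkK).trans hT)
  have hq : q i k = (W i k \ W i (k - 1)).indicator fun _ => μ i - μ (i + 1) := by
    funext t
    by_cases ht : t ∈ W i k \ W i (k - 1)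
    · rw [Set.indicator_of_mem ht, h.flow_eq i hi k hk t ht]
    · rw [Set.indicator_of_notMem ht, h.flow_eq_zero i hi k hk t ht]
  rw [hq, setIntegral_indicator ((h.measurableSet_window hi hkK).diff
      (h.measurableSet_window hi (by omega))), Set.inter_eq_right.mpr hD, setIntegral_const,
    measureReal_def, h.volume_window_sdiff hi hk,
    ENNReal.toReal_ofReal (div_pos (h.demand_pos i hi k hk) (h.gap_pos i hi)).le, smul_eq_mul,
    div_mul_cancel₀ _ (h.gap_pos i hi).ne']

end IsDSOCandidate

theorem dso_explicit_solution_general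
    (N K : ℕ) (hK : 1 ≤ K)
    (𝒯 : Set ℝ)
    -- base schedule delay cost function
    (c : ℝ → ℝ)
    (hcdec : StrictAntiOn c (Set.Iic (0 : ℝ)))
    (hcinc : StrictMonoOn c (Set.Ici (0 : ℝ)))
    -- heterogeneity parameters 1 = β¹ > … > β^K > 0, β^(K+1) = 0
    (β : ℕ → ℝ)
    (hβdec : ∀ k, 1 ≤ k → k < K → β (k + 1) < β k)
    (hβpos : ∀ k ∈ Finset.Icc 1 K, 0 < β k) (hβK1 : β (K + 1) = 0)
    -- capacities μ₁ > … > μ_N > 0, μ_(N+1) = 0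
    (μ : ℕ → ℝ) (hμdec : ∀ i, 1 ≤ i → i < N → μ (i + 1) < μ i)
    (hμpos : ∀ i ∈ Finset.Icc 1 N, 0 < μ i) (hμtop : μ (N + 1) = 0)
    -- free-flow travel times 0 ≤ d₁ < … < d_N
    (d : ℕ → ℝ)
    -- demands
    (Q : ℕ → ℕ → ℝ) (hQ : ∀ i ∈ Finset.Icc 1 N, ∀ k ∈ Finset.Icc 1 K, 0 < Q i k)
    -- group arrival windows 𝒯_(i,k) = Γ(T_(i,k)) = [t⁻_(i,k), t⁺_(i,k)] of length
    -- T_(i,k) = (Σ_(l≤k) Q_(i,l))/(μ_i − μ_(i+1)) with equal endpoint costs c̄(T_(i,k))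
    (tm tp : ℕ → ℕ → ℝ) (cbar : ℕ → ℕ → ℝ)
    (hwin : ∀ i ∈ Finset.Icc 1 N, ∀ k ∈ Finset.Icc 1 K,
      tm i k ≤ tp i k ∧
      tp i k - tm i k = (∑ l ∈ Finset.Icc 1 k, Q i l) / (μ i - μ (i + 1)) ∧
      c (tm i k) = cbar i k ∧ c (tp i k) = cbar i k)
    (W : ℕ → ℕ → Set ℝ) (hW0 : ∀ i, W i 0 = ∅)
    (hW : ∀ i ∈ Finset.Icc 1 N, ∀ k ∈ Finset.Icc 1 K, W i k = Set.Icc (tm i k) (tp i k))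
    (hWT : ∀ i ∈ Finset.Icc 1 N, W i K ⊆ 𝒯)
    -- the explicit DSO equilibrium costs ρ^SO
    (ρSO : ℕ → ℕ → ℝ)
    (hρSO : ∀ i ∈ Finset.Icc 1 N, ∀ k ∈ Finset.Icc 1 K,
      ρSO i k = (∑ l ∈ Finset.Icc k K, (β l - β (l + 1)) * cbar i l) + d i)
    -- the explicit DSO flows q^SO (all-or-nothing at rate μ_i − μ_(i+1))
    (qSO : ℕ → ℕ → ℝ → ℝ)
    (hqSO : ∀ i ∈ Finset.Icc 1 N, ∀ k ∈ Finset.Icc 1 K, ∀ t ∈ W i k \ W i (k - 1),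
      qSO i k t = μ i - μ (i + 1))
    (hqSO0 : ∀ i ∈ Finset.Icc 1 N, ∀ k ∈ Finset.Icc 1 K, ∀ t,
      t ∉ W i k \ W i (k - 1) → qSO i k t = 0)
    -- the explicit DSO prices p^SO, defined recursively on the group windows
    (pSO : ℕ → ℝ → ℝ)
    (hpSO : ∀ i ∈ Finset.Icc 1 N, ∀ k ∈ Finset.Icc 1 K, ∀ t ∈ W i k \ W i (k - 1),
      pSO i t = ρSO i k - β k * c t - d i - ∑ j ∈ Finset.Icc 1 (i - 1), pSO j t)
    (hpSO0 : ∀ i ∈ Finset.Icc 1 N, ∀ t ∉ W i K, pSO i t = 0)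
    -- spatial nesting of the windows and T_(i,K) < T_(i+1,K)
    (hTinc : ∀ i, 1 ≤ i → i < N →
      tp i K - tm i K < tp (i + 1) K - tm (i + 1) K)
    -- Assumption 1 for the candidate: positive prices on the interior of 𝒯_(i,K)
    (hA1 : ∀ i ∈ Finset.Icc 1 N, ∀ t ∈ Set.Ioo (tm i K) (tp i K), 0 < pSO i t) :
    -- KKT condition (i)
    (∀ i ∈ Finset.Icc 1 N, ∀ k ∈ Finset.Icc 1 K, ∀ t ∈ 𝒯,
      0 ≤ qSO i k t ∧
      0 ≤ β k * c t + (∑ j ∈ Finset.Icc 1 i, pSO j t) + d i - ρSO i k ∧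
      qSO i k t * (β k * c t + (∑ j ∈ Finset.Icc 1 i, pSO j t) + d i - ρSO i k) = 0) ∧
    -- KKT condition (ii)
    (∀ i ∈ Finset.Icc 1 N, ∀ t ∈ 𝒯,
      0 ≤ pSO i t ∧
      0 ≤ μ i - ∑ j ∈ Finset.Icc i N, ∑ k ∈ Finset.Icc 1 K, qSO j k t ∧
      pSO i t * (μ i - ∑ j ∈ Finset.Icc i N, ∑ k ∈ Finset.Icc 1 K, qSO j k t) = 0) ∧
    -- KKT condition (iii)
    (∀ i ∈ Finset.Icc 1 N, ∀ k ∈ Finset.Icc 1 K, ∫ t in 𝒯, qSO i k t = Q i k) := by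
  have h : IsDSOCandidate N K c β μ d Q tm tp cbar W ρSO qSO pSO :=
    { one_le_K := hK
      cost_anti := hcdec
      cost_mono := hcinc
      beta_sub_nonneg := fun l hl => (sub_add_one_pos_of_lt_of_eq_zero hβdec hβpos hβK1 l hl).le
      beta_top := hβK1
      gap_pos := sub_add_one_pos_of_lt_of_eq_zero hμdec hμpos hμtop
      mu_top := hμtop
      demand_pos := hQ
      length_eq := fun i hi k hk => (hwin i hi k hk).2.1
      cost_tm := fun i hi k hk => (hwin i hi k hk).2.2.1
      cost_tp := fun i hi k hk => (hwin i hi k hk).2.2.2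
      window_zero := hW0
      window_eq := hW
      length_lt := hTinc
      rho_eq := hρSO
      flow_eq := hqSO
      flow_eq_zero := hqSO0
      price_eq := hpSO
      price_eq_zero := hpSO0
      price_pos := hA1 }
  exact ⟨fun i hi k hk t _ => h.kkt_flow hi hk t, fun i hi t _ => h.kkt_price hi t,
    fun i hi k hk => h.integral_flow_eq hi hk (hWT i hi)⟩

/-- Proposition 1 of the paper: the explicit candidate (q^SO, p^SO, ρ^SO) satisfies
the KKT conditions of the DSO linear program, i.e. it is a DSO solution. -/
theorem dso_explicit_solution
    (N K : ℕ) (hN : 1 ≤ N) (hK : 1 ≤ K)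
    (𝒯 : Set ℝ)
    -- base schedule delay cost function
    (c : ℝ → ℝ) (hc0 : c 0 = 0) (hccont : Continuous c)
    (hcdec : StrictAntiOn c (Set.Iic (0 : ℝ)))
    (hcinc : StrictMonoOn c (Set.Ici (0 : ℝ)))
    -- heterogeneity parameters 1 = β¹ > … > β^K > 0, β^(K+1) = 0
    (β : ℕ → ℝ) (hβ1 : β 1 = 1)
    (hβdec : ∀ k, 1 ≤ k → k < K → β (k + 1) < β k)
    (hβpos : ∀ k ∈ Finset.Icc 1 K, 0 < β k) (hβK1 : β (K + 1) = 0)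
    -- capacities μ₁ > … > μ_N > 0, μ_(N+1) = 0
    (μ : ℕ → ℝ) (hμdec : ∀ i, 1 ≤ i → i < N → μ (i + 1) < μ i)
    (hμpos : ∀ i ∈ Finset.Icc 1 N, 0 < μ i) (hμtop : μ (N + 1) = 0)
    -- free-flow travel times 0 ≤ d₁ < … < d_N
    (d : ℕ → ℝ) (hd1 : 0 ≤ d 1)
    (hdinc : ∀ i, 1 ≤ i → i < N → d i < d (i + 1))
    -- demands
    (Q : ℕ → ℕ → ℝ) (hQ : ∀ i ∈ Finset.Icc 1 N, ∀ k ∈ Finset.Icc 1 K, 0 < Q i k)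
    -- group arrival windows 𝒯_(i,k) = Γ(T_(i,k)) = [t⁻_(i,k), t⁺_(i,k)] of length
    -- T_(i,k) = (Σ_(l≤k) Q_(i,l))/(μ_i − μ_(i+1)) with equal endpoint costs c̄(T_(i,k))
    (tm tp : ℕ → ℕ → ℝ) (cbar : ℕ → ℕ → ℝ)
    (hwin : ∀ i ∈ Finset.Icc 1 N, ∀ k ∈ Finset.Icc 1 K,
      tm i k ≤ tp i k ∧
      tp i k - tm i k = (∑ l ∈ Finset.Icc 1 k, Q i l) / (μ i - μ (i + 1)) ∧
      c (tm i k) = cbar i k ∧ c (tp i k) = cbar i k)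
    (W : ℕ → ℕ → Set ℝ) (hW0 : ∀ i, W i 0 = ∅)
    (hW : ∀ i ∈ Finset.Icc 1 N, ∀ k ∈ Finset.Icc 1 K, W i k = Set.Icc (tm i k) (tp i k))
    (hWT : ∀ i ∈ Finset.Icc 1 N, W i K ⊆ 𝒯)
    -- the explicit DSO equilibrium costs ρ^SO
    (ρSO : ℕ → ℕ → ℝ)
    (hρSO : ∀ i ∈ Finset.Icc 1 N, ∀ k ∈ Finset.Icc 1 K,
      ρSO i k = (∑ l ∈ Finset.Icc k K, (β l - β (l + 1)) * cbar i l) + d i)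
    -- the explicit DSO flows q^SO (all-or-nothing at rate μ_i − μ_(i+1))
    (qSO : ℕ → ℕ → ℝ → ℝ)
    (hqSO : ∀ i ∈ Finset.Icc 1 N, ∀ k ∈ Finset.Icc 1 K, ∀ t ∈ W i k \ W i (k - 1),
      qSO i k t = μ i - μ (i + 1))
    (hqSO0 : ∀ i ∈ Finset.Icc 1 N, ∀ k ∈ Finset.Icc 1 K, ∀ t,
      t ∉ W i k \ W i (k - 1) → qSO i k t = 0)
    -- the explicit DSO prices p^SO, defined recursively on the group windows
    (pSO : ℕ → ℝ → ℝ)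
    (hpSO : ∀ i ∈ Finset.Icc 1 N, ∀ k ∈ Finset.Icc 1 K, ∀ t ∈ W i k \ W i (k - 1),
      pSO i t = ρSO i k - β k * c t - d i - ∑ j ∈ Finset.Icc 1 (i - 1), pSO j t)
    (hpSO0 : ∀ i ∈ Finset.Icc 1 N, ∀ t ∉ W i K, pSO i t = 0)
    -- spatial nesting of the windows and T_(i,K) < T_(i+1,K)
    (hnest : ∀ i, 1 ≤ i → i < N → W i K ⊆ W (i + 1) K)
    (hTinc : ∀ i, 1 ≤ i → i < N →
      tp i K - tm i K < tp (i + 1) K - tm (i + 1) K)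
    -- Assumption 1 for the candidate: positive prices on the interior of 𝒯_(i,K)
    (hA1 : ∀ i ∈ Finset.Icc 1 N, ∀ t ∈ Set.Ioo (tm i K) (tp i K), 0 < pSO i t) :
    -- KKT condition (i)
    (∀ i ∈ Finset.Icc 1 N, ∀ k ∈ Finset.Icc 1 K, ∀ t ∈ 𝒯,
      0 ≤ qSO i k t ∧
      0 ≤ β k * c t + (∑ j ∈ Finset.Icc 1 i, pSO j t) + d i - ρSO i k ∧
      qSO i k t * (β k * c t + (∑ j ∈ Finset.Icc 1 i, pSO j t) + d i - ρSO i k) = 0) ∧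
    -- KKT condition (ii)
    (∀ i ∈ Finset.Icc 1 N, ∀ t ∈ 𝒯,
      0 ≤ pSO i t ∧
      0 ≤ μ i - ∑ j ∈ Finset.Icc i N, ∑ k ∈ Finset.Icc 1 K, qSO j k t ∧
      pSO i t * (μ i - ∑ j ∈ Finset.Icc i N, ∑ k ∈ Finset.Icc 1 K, qSO j k t) = 0) ∧
    -- KKT condition (iii)
    (∀ i ∈ Finset.Icc 1 N, ∀ k ∈ Finset.Icc 1 K, ∫ t in 𝒯, qSO i k t = Q i k) :=
  dso_explicit_solution_general N K hK 𝒯 c hcdec hcinc β hβdec hβpos hβK1 μ hμdec hμpos hμtop d Q hQ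
    tm tp cbar hwin W hW0 hW hWT ρSO hρSO qSO hqSO hqSO0 pSO hpSO hpSO0 hTinc hA1
end

section
/- Equilibrium under partial bottleneck pricing (Lemma 6 of the paper). Suppose c is differentiable on 𝒯, the QRP condition holds (μ_{i+1}/μ_i − 1 < c′(t) < μ_i/μ_{i+1} − 1 for every i ∈ {1,…,N−1}, t ∈ 𝒯), the explicit DSO solution (q^SO, p^SO, ρ^SO) satisfies Assumption 1, and the pricing bottleneck set is 𝒩^P = {i^P, i^P+1, …, N} for some i^P ∈ {1,…,N} (Assumption 2), with tolls p^SO_i imposed at each i ∈ 𝒩^P. Define w^PBP_i(t) = p^SO_i(t) for i ∉ 𝒩^P and w^PBP_i(t) = 0 for i ∈ 𝒩^P; σ^PBP_i(t) = t − Σ_{j≤i} w^PBP_j(t); q^PBP_{i,k}(t) = μ_i σ̇^PBP_i(t) − μ_{i+1} σ̇^PBP_{i+1}(t) for t ∈ 𝒯_{i,k}∖𝒯_{i,k−1}, 0 otherwise; ρ^PBP_{i,k} = ρ^SO_{i,k}. Then (q^PBP, w^PBP, ρ^PBP) satisfies the DUE-PBP equilibrium conditions: (i) for all i,k and a.e.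 t: q^PBP_{i,k}(t) ≥ 0, Σ_{j≤i} w^PBP_j(t) + β^k c(t) + Σ_{j∈𝒩^P, j≤i} p^SO_j(t) + d_i − ρ^PBP_{i,k} ≥ 0, and their product is 0; (ii) for all i ∉ 𝒩^P and a.e. t: w^PBP_i(t) ≥ 0, μ_i σ̇^PBP_i(t) − Σ_{j≥i} Σ_k q^PBP_{j,k}(t) ≥ 0, and their product is 0; (iii) ∫_𝒯 q^PBP_{i,k} = Q_{i,k}; (iv) 1 − Σ_{j≤i} ẇ^PBP_j(t) > 0 for all i and a.e. t. -/
/-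
The explicit DSO tolls are piecewise affine in the schedule cost. The windows `𝒯_{i,k}` are the
sublevel sets `{c ≤ c̄_{i,k}}`, with `c̄_{i,k}` increasing in `k`, and on the `k`-th ring of window
`i` the recursion gives `∑_{j ≤ i} p_j(t) = ρ_{i,k} - d_i - β^k c(t)`. Assumption 1 forces
`c̄_{i,K} ≤ c̄_{i+1,K}` (the windows are nested across bottlenecks), and then for every `t`
`∑_{j ≤ i} p_j(t) = ∑_l (β^l - β^{l+1}) (c̄_{i,l} - c(t))⁺`, a convex function of `c(t)` that
dominates each affine piece `ρ_{i,k} - d_i - β^k c(t)` and touches it on the `k`-th ring: this is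
the cost part of condition (i).

Off the finitely many window endpoints this function is differentiable with slope `-b c'(t)`,
`0 ≤ b ≤ 1`, so each `σ_i` has slope `1 + b c'(t)`; the QRP bounds make it positive, which is (iv),
and give `μ_{i+1} σ̇_{i+1} ≤ μ_i σ̇_i`, which is the sign of the flows in (i) and, after
telescoping over the bottlenecks `j ≥ i` whose windows contain `t`, the queue condition (ii).
Demand conservation (iii) is the fundamental theorem of calculus on each window: `c` takes equal
values at its endpoints, so every `σ_j` advances exactly by the window length there.
-/


open MeasureTheory Finset

section Valley

variable {c : ℝ → ℝ} {a b : ℝ}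

theorem neg_lt_zero_and_pos_of_valley (hdec : StrictAntiOn c (Set.Iic 0))
    (hinc : StrictMonoOn c (Set.Ici 0)) (hab : a < b) (hcab : c a = c b) : a < 0 ∧ 0 < b := by
  constructor
  · by_contra! ha
    exact (hinc ha (ha.trans hab.le) hab).ne hcab
  · by_contra! hb
    exact (hdec (hab.le.trans hb) hb hab).ne' hcab

theorem Icc_eq_setOf_le_of_valley (hdec : StrictAntiOn c (Set.Iic 0))
    (hinc : StrictMonoOn c (Set.Ici 0)) (hab : a < b) (hcab : c a = c b) :
    Set.Icc a b = {t | c t ≤ c b} := by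
  obtain ⟨ha, hb⟩ := neg_lt_zero_and_pos_of_valley hdec hinc hab hcab
  ext t
  simp only [Set.mem_Icc, Set.mem_ofPred_eq]
  constructor
  · rintro ⟨hat, htb⟩
    rcases le_total t 0 with ht | ht
    · exact hcab ▸ hdec.antitoneOn ha.le ht hat
    · exact hinc.monotoneOn ht hb.le htb
  · intro hct
    constructor
    · by_contra! hta
      exact (hdec (hta.le.trans ha.le) ha.le hta).not_ge (hcab ▸ hct)
    · by_contra! hbt
      exact (hinc hb.le (hb.le.trans hbt.le) hbt).not_ge hct

theorem Ioo_eq_setOf_lt_of_valley (hdec : StrictAntiOn c (Set.Iic 0))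
    (hinc : StrictMonoOn c (Set.Ici 0)) (hab : a < b) (hcab : c a = c b) :
    Set.Ioo a b = {t | c t < c b} := by
  obtain ⟨ha, hb⟩ := neg_lt_zero_and_pos_of_valley hdec hinc hab hcab
  ext t
  simp only [Set.mem_Ioo, Set.mem_ofPred_eq]
  constructor
  · rintro ⟨hat, htb⟩
    rcases le_total t 0 with ht | ht
    · exact hcab ▸ hdec ha.le ht hat
    · exact hinc ht hb.le htb
  · intro hct
    constructor
    · by_contra! hta
      exact (hdec.antitoneOn (hta.trans ha.le) ha.le hta).not_gt (hcab ▸ hct)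
    · by_contra! hbt
      exact (hinc.monotoneOn hb.le (hb.le.trans hbt) hbt).not_gt hct

theorem valley_lt_of_length_lt {a' b' : ℝ} (hdec : StrictAntiOn c (Set.Iic 0))
    (hinc : StrictMonoOn c (Set.Ici 0)) (hab : a < b) (hcab : c a = c b)
    (hcab' : c a' = c b') (hlen : b - a < b' - a') : c b < c b' := by
  by_contra! h
  have hsub := Icc_eq_setOf_le_of_valley hdec hinc hab hcab
  have ha' : a' ∈ Set.Icc a b := hsub ▸ (show c a' ≤ c b from hcab' ▸ h)
  have hb' : b' ∈ Set.Icc a b := hsub ▸ h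
  linarith [ha'.1, hb'.2]

end Valley

theorem succ_lt_of_pos_of_top_eq_zero {N : ℕ} {f : ℕ → ℝ}
    (hdec : ∀ i, 1 ≤ i → i < N → f (i + 1) < f i) (hpos : ∀ i ∈ Icc 1 N, 0 < f i)
    (htop : f (N + 1) = 0) : ∀ i ∈ Icc 1 N, f (i + 1) < f i := by
  intro i hi
  obtain ⟨hi1, hiN⟩ := Finset.mem_Icc.1 hi
  rcases hiN.lt_or_eq with h | rfl
  · exact hdec i hi1 h
  · exact htop ▸ hpos i hi

theorem sum_Icc_sub_succ {k K : ℕ} (β : ℕ → ℝ) (h : k ≤ K + 1) :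
    ∑ l ∈ Icc k K, (β l - β (l + 1)) = β k - β (K + 1) := by
  have := Finset.sum_Ico_sub (f := fun l => -β l) h
  rw [← Finset.Ico_add_one_right_eq_Icc]
  simp only [sub_neg_eq_add, neg_add_eq_sub] at this
  linarith

theorem sum_ite_sub_succ_le {g : ℕ → ℝ} {P : ℕ → Prop} [DecidablePred P] {i N : ℕ}
    (hiN : i ≤ N + 1)     (hg : ∀ j ∈ Icc i N, g (j + 1) ≤ g j) :
    ∑ j ∈ Icc i N, (if P j then g j - g (j + 1) else 0) ≤ g i - g (N + 1) := by
  rw [← sum_Icc_sub_succ g hiN]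
  refine Finset.sum_le_sum fun j hj => ?_
  split_ifs
  · exact le_rfl
  · linarith [hg j hj]

theorem sum_ite_sub_succ_eq {g : ℕ → ℝ} {P : ℕ → Prop} [DecidablePred P] {i N : ℕ}
    (hiN : i ≤ N + 1)     (hP : ∀ j ∈ Icc i N, P j) :
    ∑ j ∈ Icc i N, (if P j then g j - g (j + 1) else 0) = g i - g (N + 1) := by
  rw [← sum_Icc_sub_succ g hiN]
  exact Finset.sum_congr rfl fun j hj => if_pos (hP j hj)

section CumToll

variable {K k : ℕ} {β x : ℕ → ℝ} {v : ℝ}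

-- With `x l = c̄(T_{m,l})` and `v = c t` this is the cumulative DSO toll `∑_{j ≤ m} p^SO_j(t)`.
def cumToll (K : ℕ) (β x : ℕ → ℝ) (v : ℝ) : ℝ :=
  ∑ l ∈ Icc 1 K, (β l - β (l + 1)) * max (x l - v) 0

theorem continuous_cumToll : Continuous (cumToll K β x) := by
  unfold cumToll; fun_prop

theorem cumToll_eq_zero (h : ∀ l ∈ Icc 1 K, x l ≤ v) : cumToll K β x v = 0 :=
  Finset.sum_eq_zero fun l hl => by rw [max_eq_right (by linarith [h l hl]), mul_zero]

theorem cumToll_eq_sum_Icc (hk : 1 ≤ k) (hlow : ∀ l ∈ Icc 1 K, l < k → x l ≤ v)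
    (hup : ∀ l ∈ Icc k K, v ≤ x l) :
    cumToll K β x v = ∑ l ∈ Icc k K, (β l - β (l + 1)) * (x l - v) := by
  have hsplit : (Icc 1 K).filter (k ≤ ·) = Icc k K := by ext l; simp; omega
  rw [cumToll, ← Finset.sum_filter_add_sum_filter_not (Icc 1 K) (k ≤ ·), hsplit,
    Finset.sum_eq_zero (s := (Icc 1 K).filter _), add_zero]
  · exact Finset.sum_congr rfl fun l hl => by rw [max_eq_left (by linarith [hup l hl])]
  · intro l hl
    simp only [Finset.mem_filter, not_le] at hl
    rw [max_eq_right (by linarith [hlow l hl.1 hl.2]), mul_zero]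

theorem sum_le_cumToll (hβ : ∀ l ∈ Icc 1 K, β (l + 1) ≤ β l) (hk : 1 ≤ k) :
    ∑ l ∈ Icc k K, (β l - β (l + 1)) * (x l - v) ≤ cumToll K β x v := by
  calc ∑ l ∈ Icc k K, (β l - β (l + 1)) * (x l - v)
      ≤ ∑ l ∈ Icc k K, (β l - β (l + 1)) * max (x l - v) 0 := by
        gcongr with l hl
        · linarith [hβ l (by simp at hl ⊢; omega)]
        · exact le_max_left _ _
    _ ≤ cumToll K β x v := by
        refine Finset.sum_le_sum_of_subset_of_nonneg (Finset.Icc_subset_Icc_left hk) ?_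
        intro l hl _
        exact mul_nonneg (by linarith [hβ l hl]) (le_max_right _ _)

theorem sum_sub_succ_mul_sub (hβK : β (K + 1) = 0) (hk : k ≤ K + 1) :
    ∑ l ∈ Icc k K, (β l - β (l + 1)) * (x l - v) =
      ∑ l ∈ Icc k K, (β l - β (l + 1)) * x l - β k * v := by
  simp only [mul_sub, Finset.sum_sub_distrib, ← Finset.sum_mul, sum_Icc_sub_succ β hk, hβK,
    sub_zero]

theorem cumToll_eq_of_mem_Ioc (hβK : β (K + 1) = 0)
    (hx : MonotoneOn x (Set.Icc 1 K)) (hk : k ∈ Icc 1 K) (hlow : 1 < k → x (k - 1) < v)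
    (hup : v ≤ x k) :
    cumToll K β x v = ∑ l ∈ Icc k K, (β l - β (l + 1)) * x l - β k * v := by
  obtain ⟨hk1, hkK⟩ := Finset.mem_Icc.1 hk
  rw [cumToll_eq_sum_Icc hk1, sum_sub_succ_mul_sub hβK (by omega)]
  · intro l hl hlk
    simp only [Finset.mem_Icc] at hl
    exact (hx ⟨hl.1, hl.2⟩ ⟨by omega, by omega⟩ (by omega)).trans (hlow (by omega)).le
  · intro l hl
    simp only [Finset.mem_Icc] at hl
    exact hup.trans (hx ⟨hk1, hkK⟩ ⟨by omega, hl.2⟩ hl.1)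

theorem sub_le_cumToll (hβK : β (K + 1) = 0)
    (hβ : ∀ l ∈ Icc 1 K, β (l + 1) ≤ β l) (hk : k ∈ Icc 1 K) :
    ∑ l ∈ Icc k K, (β l - β (l + 1)) * x l - β k * v ≤ cumToll K β x v := by
  obtain ⟨hk1, hkK⟩ := Finset.mem_Icc.1 hk
  rw [← sum_sub_succ_mul_sub hβK (by omega)]
  exact sum_le_cumToll hβ hk1

theorem sum_sub_succ_mem_Icc (hβ : ∀ l ∈ Icc 1 K, β (l + 1) ≤ β l) {s : Finset ℕ}
    (hs : s ⊆ Icc 1 K) : ∑ l ∈ s, (β l - β (l + 1)) ∈ Set.Icc 0 (β 1 - β (K + 1)) := by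
  have hnn : ∀ l ∈ Icc 1 K, 0 ≤ β l - β (l + 1) := fun l hl => by linarith [hβ l hl]
  refine ⟨Finset.sum_nonneg fun l hl => hnn l (hs hl), ?_⟩
  rw [← sum_Icc_sub_succ β (by omega)]
  exact Finset.sum_le_sum_of_subset_of_nonneg hs fun l hl _ => hnn l hl

theorem hasDerivAt_max_sub_zero {y : ℝ} (h : y ≠ v) :
    HasDerivAt (fun u => max (y - u) 0) (if v < y then -1 else 0) v := by
  rcases h.lt_or_gt with hyv | hvy
  · rw [if_neg hyv.not_gt]
    refine (hasDerivAt_const v (0 : ℝ)).congr_of_eventuallyEq ?_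
    filter_upwards [Ioi_mem_nhds hyv] with u hu
    exact max_eq_right (by linarith [Set.mem_Ioi.mp hu])
  · rw [if_pos hvy]
    refine ((hasDerivAt_id v).const_sub y).congr_of_eventuallyEq ?_
    filter_upwards [Iio_mem_nhds hvy] with u hu
    exact max_eq_left (by linarith [Set.mem_Iio.mp hu])

theorem hasDerivAt_cumToll (h : ∀ l ∈ Icc 1 K, x l ≠ v) :
    HasDerivAt (cumToll K β x) (-∑ l ∈ Icc 1 K with v < x l, (β l - β (l + 1))) v := by
  have := HasDerivAt.fun_sum fun l hl =>
    (hasDerivAt_max_sub_zero (h l hl)).const_mul (β l - β (l + 1))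
  refine this.congr_deriv ?_
  rw [Finset.sum_filter, ← Finset.sum_neg_distrib]
  exact Finset.sum_congr rfl fun l _ => by split_ifs <;> ring

theorem hasDerivAt_cumToll_comp {c : ℝ → ℝ} {t : ℝ} (hc : Continuous c)
    (hx : ∀ l ∈ Icc 1 K, x l ≠ c t) (hd : (∃ l ∈ Icc 1 K, c t < x l) → DifferentiableAt ℝ c t) :
    HasDerivAt (fun s => cumToll K β x (c s))
      (-(∑ l ∈ Icc 1 K with c t < x l, (β l - β (l + 1))) * deriv c t) t := by
  by_cases h : ∃ l ∈ Icc 1 K, c t < x l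
  · exact (hasDerivAt_cumToll hx).comp t (hd h).hasDerivAt
  · push Not at h
    have hlt : ∀ l ∈ Icc 1 K, x l < c t := fun l hl => (h l hl).lt_of_ne (hx l hl)
    rw [Finset.filter_false_of_mem fun l hl => (h l hl).not_gt, Finset.sum_empty, neg_zero,
      zero_mul]
    refine (hasDerivAt_const t (0 : ℝ)).congr_of_eventuallyEq ?_
    have hopen : IsOpen {s | ∀ l ∈ Icc 1 K, x l < c s} := by
      simp only [Set.ofPred_forall]
      exact isOpen_biInter_finset fun l _ => isOpen_lt continuous_const hc
    filter_upwards [hopen.mem_nhds hlt] with s hs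
    exact cumToll_eq_zero fun l hl => (hs l hl).le

end CumToll

section Sets

variable {α : Type*} {W : ℕ → Set α}

theorem exists_mem_sdiff_pred (h0 : W 0 = ∅) {t : α} :
    ∀ {K : ℕ}, t ∈ W K → ∃ k ∈ Icc 1 K, t ∈ W k \ W (k - 1)
  | 0, ht => by simp [h0] at ht
  | K + 1, ht => by
    by_cases htK : t ∈ W K
    · obtain ⟨k, hk, hkt⟩ := exists_mem_sdiff_pred h0 htK
      exact ⟨k, Finset.Icc_subset_Icc_right (Nat.le_succ K) hk, hkt⟩
    · exact ⟨K + 1, by simp, ht, htK⟩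

theorem sum_indicator_sdiff_pred (h0 : W 0 = ∅) (f : α → ℝ) (t : α) :
    ∀ {K : ℕ}, MonotoneOn W (Set.Iic K) →
      ∑ k ∈ Icc 1 K, (W k \ W (k - 1)).indicator f t = (W K).indicator f t
  | 0, _ => by simp [h0]
  | K + 1, hW => by
    rw [Finset.sum_Icc_succ_top (by omega), sum_indicator_sdiff_pred h0 f t
      (hW.mono (Set.Iic_subset_Iic.2 (Nat.le_succ K))), Nat.add_sub_cancel,
      Set.indicator_sdiff (hW (by simp) (by simp) (Nat.le_succ K))]
    simp

end Sets

theorem integrableOn_Icc_of_abs_le {φ : ℝ → ℝ} {B : Set ℝ} {C : ℝ} (hB : B.Countable)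
    (hφ : Measurable φ) (hC : ∀ s ∉ B, |φ s| ≤ C) (a b : ℝ) :
    IntegrableOn φ (Set.Icc a b) :=
  Measure.integrableOn_of_bounded measure_Icc_lt_top.ne hφ.aestronglyMeasurable
    (ae_restrict_of_ae ((hB.ae_notMem volume).mono hC))

theorem setIntegral_Icc_sub_mul_deriv {σ τ : ℝ → ℝ} {a b m n : ℝ} {B : Set ℝ} (hab : a ≤ b)
    (hB : B.Countable) (hσ : Continuous σ) (hτ : Continuous τ)
    (hσd : ∀ s ∉ B, DifferentiableAt ℝ σ s) (hτd : ∀ s ∉ B, DifferentiableAt ℝ τ s)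
    (hσab : σ b - σ a = b - a) (hτab : τ b - τ a = b - a)
    (hint : IntegrableOn (fun s => m * deriv σ s - n * deriv τ s) (Set.Icc a b)) :
    ∫ s in Set.Icc a b, (m * deriv σ s - n * deriv τ s) = (m - n) * (b - a) := by
  rw [integral_Icc_eq_integral_Ioc, ← intervalIntegral.integral_of_le hab,
    integral_eq_of_hasDerivAt_off_countable_of_le (fun s => m * σ s - n * τ s) _ hab hB
      (by fun_prop) (fun s hs => ((hσd s hs.2).hasDerivAt.const_mul m).sub
        ((hτd s hs.2).hasDerivAt.const_mul n))
      ((intervalIntegrable_iff_integrableOn_Icc_of_le hab).2 hint)]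
  linear_combination m * hσab - n * hτab

theorem one_add_mul_pos {b x : ℝ} (hb : b ∈ Set.Icc (0 : ℝ) 1) (hx : -1 < x) : 0 < 1 + b * x := by
  nlinarith [hb.1, hb.2, mul_nonneg hb.1 (by linarith : (0 : ℝ) ≤ 1 + x)]

theorem mul_one_add_mul_lt {μ ν x b₁ b₂ : ℝ} (hν : 0 < ν) (hνμ : ν < μ) (hlo : ν / μ - 1 < x)
    (hhi : x < μ / ν - 1) (hb₁ : b₁ ∈ Set.Icc (0 : ℝ) 1) (hb₂ : b₂ ∈ Set.Icc (0 : ℝ) 1) :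
    ν * (1 + b₂ * x) < μ * (1 + b₁ * x) := by
  have hμ : 0 < μ := hν.trans hνμ
  have h₁ : ν < μ * (1 + x) := by
    have := (div_lt_iff₀ hμ).1 (show ν / μ < 1 + x by linarith); linarith
  have h₂ : ν * (1 + x) < μ := by
    have := (lt_div_iff₀ hν).1 (show 1 + x < μ / ν by linarith); linarith
  rcases le_total 0 x with hx | hx
  · nlinarith [mul_nonneg hν.le (mul_nonneg (sub_nonneg.2 hb₂.2) hx),
      mul_nonneg hμ.le (mul_nonneg hb₁.1 hx)]
  · nlinarith [mul_nonneg hν.le (mul_nonneg hb₂.1 (neg_nonneg.2 hx)),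
      mul_nonneg hμ.le (mul_nonneg (sub_nonneg.2 hb₁.2) (neg_nonneg.2 hx))]

section DSO

variable {N K : ℕ} {c : ℝ → ℝ} {β μ d : ℕ → ℝ} {Q cbar tm tp ρSO : ℕ → ℕ → ℝ}
  {W : ℕ → ℕ → Set ℝ} {pSO : ℕ → ℝ → ℝ} {𝒯 : Set ℝ}

theorem tm_lt_tp (hgap : ∀ i ∈ Icc 1 N, μ (i + 1) < μ i)
    (hQ : ∀ i ∈ Icc 1 N, ∀ k ∈ Icc 1 K, 0 < Q i k)
    (hwin : ∀ i ∈ Icc 1 N, ∀ k ∈ Icc 1 K,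
      tm i k ≤ tp i k ∧ tp i k - tm i k = (∑ l ∈ Icc 1 k, Q i l) / (μ i - μ (i + 1)) ∧
      c (tm i k) = cbar i k ∧ c (tp i k) = cbar i k) :
    ∀ i ∈ Icc 1 N, ∀ k ∈ Icc 1 K, tm i k < tp i k := by
  intro i hi k hk
  have hsum : 0 < ∑ l ∈ Icc 1 k, Q i l := by
    simp only [Finset.mem_Icc] at hk
    refine Finset.sum_pos (fun l hl => hQ i hi l ?_) ⟨1, by simp; omega⟩
    simp only [Finset.mem_Icc] at hl ⊢; omega
  linarith [(hwin i hi k hk).2.1, div_pos hsum (sub_pos.2 (hgap i hi))]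

theorem window_eq_setOf_le (hdec : StrictAntiOn c (Set.Iic 0)) (hinc : StrictMonoOn c (Set.Ici 0))
    (hwin : ∀ i ∈ Icc 1 N, ∀ k ∈ Icc 1 K,
      tm i k ≤ tp i k ∧ tp i k - tm i k = (∑ l ∈ Icc 1 k, Q i l) / (μ i - μ (i + 1)) ∧
      c (tm i k) = cbar i k ∧ c (tp i k) = cbar i k)
    (hlt : ∀ i ∈ Icc 1 N, ∀ k ∈ Icc 1 K, tm i k < tp i k) :
    ∀ i ∈ Icc 1 N, ∀ k ∈ Icc 1 K, Set.Icc (tm i k) (tp i k) = {t | c t ≤ cbar i k} ∧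
      Set.Ioo (tm i k) (tp i k) = {t | c t < cbar i k} := by
  intro i hi k hk
  obtain ⟨-, -, hm, hp⟩ := hwin i hi k hk
  have hcab : c (tm i k) = c (tp i k) := hm.trans hp.symm
  rw [Icc_eq_setOf_le_of_valley hdec hinc (hlt i hi k hk) hcab,
    Ioo_eq_setOf_lt_of_valley hdec hinc (hlt i hi k hk) hcab, hp]
  exact ⟨rfl, rfl⟩

theorem cbar_strictMonoOn (hdec : StrictAntiOn c (Set.Iic 0)) (hinc : StrictMonoOn c (Set.Ici 0))
    (hgap : ∀ i ∈ Icc 1 N, μ (i + 1) < μ i) (hQ : ∀ i ∈ Icc 1 N, ∀ k ∈ Icc 1 K, 0 < Q i k)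
    (hwin : ∀ i ∈ Icc 1 N, ∀ k ∈ Icc 1 K,
      tm i k ≤ tp i k ∧ tp i k - tm i k = (∑ l ∈ Icc 1 k, Q i l) / (μ i - μ (i + 1)) ∧
      c (tm i k) = cbar i k ∧ c (tp i k) = cbar i k)
    (hlt : ∀ i ∈ Icc 1 N, ∀ k ∈ Icc 1 K, tm i k < tp i k) :
    ∀ i ∈ Icc 1 N, StrictMonoOn (cbar i) (Set.Icc 1 K) := by
  intro i hi
  refine strictMonoOn_of_lt_succ Set.ordConnected_Icc fun k _ hk hsk => ?_
  simp only [Order.succ_eq_add_one, Set.mem_Icc] at hk hsk ⊢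
  have hk' : k ∈ Icc 1 K := Finset.mem_Icc.2 hk
  have hsk' : k + 1 ∈ Icc 1 K := Finset.mem_Icc.2 hsk
  obtain ⟨-, hlen, hm, hp⟩ := hwin i hi k hk'
  obtain ⟨-, hlen', hm', hp'⟩ := hwin i hi (k + 1) hsk'
  rw [← hp, ← hp']
  refine valley_lt_of_length_lt hdec hinc (hlt i hi k hk') (hm.trans hp.symm)
    (hm'.trans hp'.symm) ?_
  rw [hlen, hlen', Finset.sum_Icc_succ_top (by omega), add_div]
  linarith [div_pos (hQ i hi (k + 1) hsk') (sub_pos.2 (hgap i hi))]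

theorem window_monotoneOn (hW0 : ∀ i, W i 0 = ∅)
    (hWc : ∀ i ∈ Icc 1 N, ∀ k ∈ Icc 1 K, W i k = {t | c t ≤ cbar i k})
    (hcbar : ∀ i ∈ Icc 1 N, MonotoneOn (cbar i) (Set.Icc 1 K)) :
    ∀ i ∈ Icc 1 N, MonotoneOn (W i) (Set.Iic K) := by
  intro i hi k hk k' hk' hkk'
  rcases Nat.eq_zero_or_pos k with rfl | hk0
  · rw [hW0]
    exact Set.empty_subset _
  rw [hWc i hi k (Finset.mem_Icc.2 ⟨hk0, hkk'.trans hk'⟩),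
    hWc i hi k' (Finset.mem_Icc.2 ⟨hk0.trans_le hkk', hk'⟩)]
  exact fun s hs => le_trans hs (hcbar i hi ⟨hk0, hkk'.trans hk'⟩ ⟨hk0.trans_le hkk', hk'⟩ hkk')

theorem countable_setOf_eq_cbar
    (hwindow : ∀ i ∈ Icc 1 N, ∀ k ∈ Icc 1 K, Set.Icc (tm i k) (tp i k) = {t | c t ≤ cbar i k} ∧
      Set.Ioo (tm i k) (tp i k) = {t | c t < cbar i k})
    (hle : ∀ i ∈ Icc 1 N, ∀ k ∈ Icc 1 K, tm i k ≤ tp i k) :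
    {t | ∃ i ∈ Icc 1 N, ∃ k ∈ Icc 1 K, c t = cbar i k}.Countable := by
  refine Set.Countable.mono ?_ ((Icc 1 N ×ˢ Icc 1 K).biUnion
    fun p => ({tm p.1 p.2, tp p.1 p.2} : Finset ℝ)).countable_toSet
  rintro t ⟨i, hi, k, hk, ht⟩
  have hmem : t ∈ Set.Icc (tm i k) (tp i k) \ Set.Ioo (tm i k) (tp i k) := by
    rw [(hwindow i hi k hk).1, (hwindow i hi k hk).2]
    exact ⟨ht.le, ht.not_lt⟩
  rw [Set.Icc_sdiff_Ioo_same (hle i hi k hk)] at hmem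
  simp only [Finset.coe_biUnion, Finset.coe_product, Finset.coe_insert, Finset.coe_singleton,
    Set.mem_iUnion]
  exact ⟨(i, k), Set.mem_prod.2 ⟨hi, hk⟩, hmem⟩

theorem sum_pSO_of_mem_ring
    (hpSO : ∀ i ∈ Icc 1 N, ∀ k ∈ Icc 1 K, ∀ t ∈ W i k \ W i (k - 1),
      pSO i t = ρSO i k - β k * c t - d i - ∑ j ∈ Icc 1 (i - 1), pSO j t)
    {m k : ℕ} (hm : m ∈ Icc 1 N) (hk : k ∈ Icc 1 K) {t : ℝ} (ht : t ∈ W m k \ W m (k - 1)) :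
    ∑ j ∈ Icc 1 m, pSO j t = ρSO m k - β k * c t - d m := by
  obtain ⟨m, rfl⟩ : ∃ m', m = m' + 1 := ⟨m - 1, by simp at hm; omega⟩
  rw [Finset.sum_Icc_succ_top (by omega), hpSO _ hm k hk t ht, Nat.add_sub_cancel]
  ring

theorem sum_pSO_eq_cumToll_of_le (hβK1 : β (K + 1) = 0) (hW0 : ∀ i, W i 0 = ∅)
    (hWc : ∀ i ∈ Icc 1 N, ∀ k ∈ Icc 1 K, W i k = {t | c t ≤ cbar i k})
    (hcbar : ∀ i ∈ Icc 1 N, MonotoneOn (cbar i) (Set.Icc 1 K))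
    (hρSO : ∀ i ∈ Icc 1 N, ∀ k ∈ Icc 1 K,
      ρSO i k = (∑ l ∈ Icc k K, (β l - β (l + 1)) * cbar i l) + d i)
    (hpSO : ∀ i ∈ Icc 1 N, ∀ k ∈ Icc 1 K, ∀ t ∈ W i k \ W i (k - 1),
      pSO i t = ρSO i k - β k * c t - d i - ∑ j ∈ Icc 1 (i - 1), pSO j t)
    (hK : 1 ≤ K) :
    ∀ m ∈ Icc 1 N, ∀ t, c t ≤ cbar m K → ∑ j ∈ Icc 1 m, pSO j t = cumToll K β (cbar m) (c t) := by
  intro m hm t ht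
  have htK : t ∈ W m K := by rw [hWc m hm K (by simp [hK])]; exact ht
  obtain ⟨k, hk, htk, htk'⟩ := exists_mem_sdiff_pred (hW0 m) htK
  rw [sum_pSO_of_mem_ring hpSO hm hk ⟨htk, htk'⟩, hρSO m hm k hk]
  rw [hWc m hm k hk] at htk
  rw [cumToll_eq_of_mem_Ioc hβK1 (hcbar m hm) hk ?_ htk]
  · ring
  · intro hk1
    have hk' : k - 1 ∈ Icc 1 K := by simp at hk ⊢; omega
    rw [hWc m hm _ hk'] at htk'
    exact lt_of_not_ge htk'

theorem exists_cbar_pred_lt_lt (hdec : StrictAntiOn c (Set.Iic 0))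
    (hinc : StrictMonoOn c (Set.Ici 0))
    (hwin : ∀ i ∈ Icc 1 N, ∀ k ∈ Icc 1 K,
      tm i k ≤ tp i k ∧ tp i k - tm i k = (∑ l ∈ Icc 1 k, Q i l) / (μ i - μ (i + 1)) ∧
      c (tm i k) = cbar i k ∧ c (tp i k) = cbar i k)
    (hlt : ∀ i ∈ Icc 1 N, ∀ k ∈ Icc 1 K, tm i k < tp i k)
    (hcbar : ∀ i ∈ Icc 1 N, StrictMonoOn (cbar i) (Set.Icc 1 K)) (hK : 1 ≤ K) :
    ∀ m ∈ Icc 1 N, ∃ t, (1 < K → cbar m (K - 1) < c t) ∧ c t < cbar m K := by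
  intro m hm
  have htp : ∀ k ∈ Icc 1 K, 0 < tp m k ∧ c (tp m k) = cbar m k := fun k hk =>
    ⟨(neg_lt_zero_and_pos_of_valley hdec hinc (hlt m hm k hk)
      ((hwin m hm k hk).2.2.1.trans (hwin m hm k hk).2.2.2.symm)).2, (hwin m hm k hk).2.2.2⟩
  obtain ⟨hb, hcb⟩ := htp K (by simp [hK])
  rcases hK.eq_or_lt with hK1 | hK1
  · refine ⟨0, fun h => absurd h (by omega), ?_⟩
    exact hcb ▸ hinc Set.self_mem_Ici hb.le hb
  · obtain ⟨ha, hca⟩ := htp (K - 1) (by simp; omega)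
    have hab : tp m (K - 1) < tp m K := by
      rw [← hinc.lt_iff_lt ha.le hb.le, hca, hcb]
      exact hcbar m hm ⟨by omega, by omega⟩ ⟨hK, le_rfl⟩ (by omega)
    refine ⟨(tp m (K - 1) + tp m K) / 2, fun _ => ?_, ?_⟩
    · exact hca ▸ hinc ha.le (by simp only [Set.mem_Ici]; linarith) (by linarith)
    · exact hcb ▸ hinc (by simp only [Set.mem_Ici]; linarith) hb.le (by linarith)

theorem cbar_top_monotoneOn (hK : 1 ≤ K) (hβK1 : β (K + 1) = 0)
    (hβ : ∀ l ∈ Icc 1 K, β (l + 1) ≤ β l) (hβK : 0 < β K)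
    (hcbar : ∀ i ∈ Icc 1 N, MonotoneOn (cbar i) (Set.Icc 1 K))
    (hS : ∀ m ∈ Icc 1 N, ∀ t, c t ≤ cbar m K → ∑ j ∈ Icc 1 m, pSO j t = cumToll K β (cbar m) (c t))
    (hpt : ∀ m ∈ Icc 1 N, ∃ t, (1 < K → cbar m (K - 1) < c t) ∧ c t < cbar m K)
    (hA1 : ∀ i ∈ Icc 1 N, ∀ t, c t < cbar i K → 0 < pSO i t) :
    MonotoneOn (fun i => cbar i K) (Set.Icc 1 N) := by
  -- Otherwise, at a point of the outermost ring of window `i + 1`, the cumulative tolls up to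
  -- `i` and up to `i + 1` would force `p_{i+1} < 0`, against Assumption 1.
  refine monotoneOn_of_le_succ Set.ordConnected_Icc fun i _ hi hsi => ?_
  simp only [Order.succ_eq_add_one, Set.mem_Icc] at hi hsi ⊢
  have hi' : i ∈ Icc 1 N := Finset.mem_Icc.2 hi
  have hsi' : i + 1 ∈ Icc 1 N := Finset.mem_Icc.2 hsi
  have hKK : K ∈ Icc 1 K := Finset.mem_Icc.2 ⟨hK, le_rfl⟩
  by_contra! h
  obtain ⟨t, hlow, hup⟩ := hpt (i + 1) hsi'
  have hnext : ∑ j ∈ Icc 1 (i + 1), pSO j t = β K * (cbar (i + 1) K - c t) := by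
    rw [hS _ hsi' t hup.le, cumToll_eq_of_mem_Ioc hβK1 (hcbar _ hsi') hKK hlow hup.le,
      Finset.Icc_self, Finset.sum_singleton, hβK1]
    ring
  have hcur : β K * cbar i K - β K * c t ≤ ∑ j ∈ Icc 1 i, pSO j t := by
    rw [hS i hi' t (hup.trans h).le]
    simpa [hβK1] using sub_le_cumToll (x := cbar i) (v := c t) hβK1 hβ hKK
  have hstep := Finset.sum_Icc_succ_top (show 1 ≤ i + 1 by omega) (fun j => pSO j t)
  nlinarith [hA1 _ hsi' t hup, mul_pos hβK (sub_pos.2 h)]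

theorem sum_pSO_eq_cumToll (hK : 1 ≤ K)
    (hWc : ∀ i ∈ Icc 1 N, ∀ k ∈ Icc 1 K, W i k = {t | c t ≤ cbar i k})
    (hcbar : ∀ i ∈ Icc 1 N, MonotoneOn (cbar i) (Set.Icc 1 K))
    (hnest : MonotoneOn (fun i => cbar i K) (Set.Icc 1 N))
    (hpSO0 : ∀ i ∈ Icc 1 N, ∀ t ∉ W i K, pSO i t = 0)
    (hS : ∀ m ∈ Icc 1 N, ∀ t, c t ≤ cbar m K →
      ∑ j ∈ Icc 1 m, pSO j t = cumToll K β (cbar m) (c t)) :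
    ∀ m ∈ Icc 1 N, ∀ t, ∑ j ∈ Icc 1 m, pSO j t = cumToll K β (cbar m) (c t) := by
  intro m hm t
  by_cases ht : c t ≤ cbar m K
  · exact hS m hm t ht
  push Not at ht
  have hm' := Finset.mem_Icc.1 hm
  rw [cumToll_eq_zero fun l hl => ((hcbar m hm (Finset.mem_Icc.1 hl) ⟨hK, le_rfl⟩
    (Finset.mem_Icc.1 hl).2).trans ht.le), Finset.sum_eq_zero]
  intro j hj
  have hj' := Finset.mem_Icc.1 hj
  have hjN : j ∈ Icc 1 N := Finset.mem_Icc.2 ⟨hj'.1, hj'.2.trans hm'.2⟩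
  refine hpSO0 j hjN t ?_
  rw [hWc j hjN K (Finset.mem_Icc.2 ⟨hK, le_rfl⟩), Set.mem_ofPred_eq, not_le]
  exact (hnest (Finset.mem_Icc.1 hjN) hm' hj'.2).trans_lt ht

theorem pSO_nonneg (hK : 1 ≤ K)
    (hWc : ∀ i ∈ Icc 1 N, ∀ k ∈ Icc 1 K, W i k = {t | c t ≤ cbar i k})
    (hpSO0 : ∀ i ∈ Icc 1 N, ∀ t ∉ W i K, pSO i t = 0)
    (hA1 : ∀ i ∈ Icc 1 N, ∀ t, c t < cbar i K → 0 < pSO i t)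
    {j : ℕ} (hj : j ∈ Icc 1 N) {t : ℝ} (ht : c t ≠ cbar j K) : 0 ≤ pSO j t := by
  rcases ht.lt_or_gt with h | h
  · exact (hA1 j hj t h).le
  · refine (hpSO0 j hj t ?_).ge
    rw [hWc j hj K (Finset.mem_Icc.2 ⟨hK, le_rfl⟩)]
    exact h.not_ge

theorem dso_solution_structure (hcdec : StrictAntiOn c (Set.Iic 0))
    (hcinc : StrictMonoOn c (Set.Ici 0)) (hK : 1 ≤ K) (hβK1 : β (K + 1) = 0)
    (hβ : ∀ l ∈ Icc 1 K, β (l + 1) ≤ β l) (hβK : 0 < β K)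
    (hgap : ∀ i ∈ Icc 1 N, μ (i + 1) < μ i) (hQ : ∀ i ∈ Icc 1 N, ∀ k ∈ Icc 1 K, 0 < Q i k)
    (hwin : ∀ i ∈ Icc 1 N, ∀ k ∈ Icc 1 K,
      tm i k ≤ tp i k ∧ tp i k - tm i k = (∑ l ∈ Icc 1 k, Q i l) / (μ i - μ (i + 1)) ∧
      c (tm i k) = cbar i k ∧ c (tp i k) = cbar i k)
    (hW0 : ∀ i, W i 0 = ∅)
    (hW : ∀ i ∈ Icc 1 N, ∀ k ∈ Icc 1 K, W i k = Set.Icc (tm i k) (tp i k))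
    (hWT : ∀ i ∈ Icc 1 N, W i K ⊆ 𝒯)
    (hρSO : ∀ i ∈ Icc 1 N, ∀ k ∈ Icc 1 K,
      ρSO i k = (∑ l ∈ Icc k K, (β l - β (l + 1)) * cbar i l) + d i)
    (hpSO : ∀ i ∈ Icc 1 N, ∀ k ∈ Icc 1 K, ∀ t ∈ W i k \ W i (k - 1),
      pSO i t = ρSO i k - β k * c t - d i - ∑ j ∈ Icc 1 (i - 1), pSO j t)
    (hpSO0 : ∀ i ∈ Icc 1 N, ∀ t ∉ W i K, pSO i t = 0)
    (hA1 : ∀ i ∈ Icc 1 N, ∀ t ∈ 𝒯, (0 < pSO i t ↔ t ∈ Set.Ioo (tm i K) (tp i K))) :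
    (∀ i ∈ Icc 1 N, ∀ k ∈ Icc 1 K, W i k = {t | c t ≤ cbar i k}) ∧
    (∀ i ∈ Icc 1 N, MonotoneOn (cbar i) (Set.Icc 1 K)) ∧
    MonotoneOn (fun i => cbar i K) (Set.Icc 1 N) ∧
    (∀ m ∈ Icc 1 N, ∀ t, ∑ j ∈ Icc 1 m, pSO j t = cumToll K β (cbar m) (c t)) ∧
    (∀ j ∈ Icc 1 N, ∀ t, c t ≠ cbar j K → 0 ≤ pSO j t) ∧
    {t | ∃ i ∈ Icc 1 N, ∃ k ∈ Icc 1 K, c t = cbar i k}.Countable := by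
  have hKK : K ∈ Icc 1 K := Finset.mem_Icc.2 ⟨hK, le_rfl⟩
  have hlt := tm_lt_tp hgap hQ hwin
  have hwindow := window_eq_setOf_le hcdec hcinc hwin hlt
  have hWc : ∀ i ∈ Icc 1 N, ∀ k ∈ Icc 1 K, W i k = {t | c t ≤ cbar i k} := fun i hi k hk =>
    (hW i hi k hk).trans (hwindow i hi k hk).1
  have hcbar := cbar_strictMonoOn hcdec hcinc hgap hQ hwin hlt
  have hcbar' := fun i hi => (hcbar i hi).monotoneOn
  have hA1' : ∀ i ∈ Icc 1 N, ∀ t, c t < cbar i K → 0 < pSO i t := fun i hi t ht =>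
    (hA1 i hi t (hWT i hi (by rw [hWc i hi K hKK]; exact ht.le))).2
      (by rw [(hwindow i hi K hKK).2]; exact ht)
  have hSwin := sum_pSO_eq_cumToll_of_le hβK1 hW0 hWc hcbar' hρSO hpSO hK
  have hnest := cbar_top_monotoneOn hK hβK1 hβ hβK hcbar' hSwin
    (exists_cbar_pred_lt_lt hcdec hcinc hwin hlt hcbar hK) hA1'
  exact ⟨hWc, hcbar', hnest, sum_pSO_eq_cumToll hK hWc hcbar' hnest hpSO0 hSwin,
    fun j hj t => pSO_nonneg hK hWc hpSO0 hA1' hj,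
    countable_setOf_eq_cbar hwindow fun i hi k hk => (hlt i hi k hk).le⟩

end DSO

-- The paper's `σ^PBP_i` for `w = w^PBP`.
def sigma (w : ℕ → ℝ → ℝ) (i : ℕ) (s : ℝ) : ℝ := s - ∑ j ∈ Icc 1 i, w j s

section PBP

variable {N K iP : ℕ} {c : ℝ → ℝ} {β μ : ℕ → ℝ} {cbar : ℕ → ℕ → ℝ} {W : ℕ → ℕ → Set ℝ}
  {pSO wP : ℕ → ℝ → ℝ} {𝒯 : Set ℝ}

theorem wP_eq_ite (hwP1 : ∀ i ∈ Icc 1 N, i ∈ Icc iP N → ∀ t, wP i t = 0)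
    (hwP2 : ∀ i ∈ Icc 1 N, i ∉ Icc iP N → ∀ t, wP i t = pSO i t) {j : ℕ} (hj : j ∈ Icc 1 N)
    (s : ℝ) : wP j s = if j < iP then pSO j s else 0 := by
  have hj' := Finset.mem_Icc.1 hj
  split_ifs with h
  · exact hwP2 j hj (by simp; omega) s
  · exact hwP1 j hj (by simp; omega) s

theorem sum_wP_eq (hwP1 : ∀ i ∈ Icc 1 N, i ∈ Icc iP N → ∀ t, wP i t = 0)
    (hwP2 : ∀ i ∈ Icc 1 N, i ∉ Icc iP N → ∀ t, wP i t = pSO i t) {i : ℕ} (hi : i ≤ N) (s : ℝ) :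
    ∑ j ∈ Icc 1 i, wP j s = ∑ j ∈ Icc 1 (min i (iP - 1)), pSO j s := by
  rw [Finset.sum_congr rfl fun j hj => wP_eq_ite hwP1 hwP2
    (Finset.Icc_subset_Icc_right hi hj) s, ← Finset.sum_filter]
  congr 1
  ext j
  simp only [Finset.mem_filter, Finset.mem_Icc]
  omega

theorem sum_wP_add_sum_pSO (hiP : 1 ≤ iP) (hwP1 : ∀ i ∈ Icc 1 N, i ∈ Icc iP N → ∀ t, wP i t = 0)
    (hwP2 : ∀ i ∈ Icc 1 N, i ∉ Icc iP N → ∀ t, wP i t = pSO i t) {i : ℕ} (hi : i ≤ N) (s : ℝ) :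
    ∑ j ∈ Icc 1 i, wP j s + ∑ j ∈ Icc iP i, pSO j s = ∑ j ∈ Icc 1 i, pSO j s := by
  rw [sum_wP_eq hwP1 hwP2 hi, ← Finset.sum_union]
  · congr 1
    ext j
    simp only [Finset.mem_union, Finset.mem_Icc]
    omega
  · rw [Finset.disjoint_left]
    intro j
    simp only [Finset.mem_Icc]
    omega

theorem sigma_eq_sub_comp (hwP1 : ∀ i ∈ Icc 1 N, i ∈ Icc iP N → ∀ t, wP i t = 0)
    (hwP2 : ∀ i ∈ Icc 1 N, i ∉ Icc iP N → ∀ t, wP i t = pSO i t)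
    (hS : ∀ m ∈ Icc 1 N, ∀ t, ∑ j ∈ Icc 1 m, pSO j t = cumToll K β (cbar m) (c t))
    {i : ℕ} (hi : i ≤ N) : ∃ F : ℝ → ℝ, Continuous F ∧ ∀ s, sigma wP i s = s - F (c s) := by
  rcases Nat.eq_zero_or_pos (min i (iP - 1)) with hm | hm
  · refine ⟨0, continuous_const, fun s => ?_⟩
    simp [sigma, sum_wP_eq hwP1 hwP2 hi, hm]
  · refine ⟨cumToll K β (cbar (min i (iP - 1))), continuous_cumToll, fun s => ?_⟩
    rw [sigma, sum_wP_eq hwP1 hwP2 hi, hS _ (Finset.mem_Icc.2 ⟨hm, by omega⟩)]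

-- The slope coefficient `b` can only be nonzero at points of `𝒯`, where the QRP bounds on `c'`
-- are available.
theorem hasDerivAt_sum_pSO (hc : Continuous c) (hdiff : ∀ t ∈ 𝒯, DifferentiableAt ℝ c t)
    (hβ1 : β 1 = 1) (hβK1 : β (K + 1) = 0) (hβ : ∀ l ∈ Icc 1 K, β (l + 1) ≤ β l) (hK : 1 ≤ K)
    (hWc : ∀ i ∈ Icc 1 N, ∀ k ∈ Icc 1 K, W i k = {t | c t ≤ cbar i k})
    (hWT : ∀ i ∈ Icc 1 N, W i K ⊆ 𝒯)
    (hcbar : ∀ i ∈ Icc 1 N, MonotoneOn (cbar i) (Set.Icc 1 K))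
    (hS : ∀ m ∈ Icc 1 N, ∀ t, ∑ j ∈ Icc 1 m, pSO j t = cumToll K β (cbar m) (c t))
    {m : ℕ} (hm : m ≤ N) {t : ℝ} (ht : ∀ i ∈ Icc 1 N, ∀ k ∈ Icc 1 K, c t ≠ cbar i k) :
    ∃ b ∈ Set.Icc (0 : ℝ) 1, (b = 0 ∨ (t ∈ 𝒯 ∧ 1 ≤ m)) ∧
      HasDerivAt (fun s => ∑ j ∈ Icc 1 m, pSO j s) (-(b * deriv c t)) t := by
  rcases Nat.eq_zero_or_pos m with rfl | hm1
  · refine ⟨0, by simp, Or.inl rfl, ?_⟩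
    simpa using hasDerivAt_const t (0 : ℝ)
  have hm' : m ∈ Icc 1 N := Finset.mem_Icc.2 ⟨hm1, hm⟩
  have hT : (∃ l ∈ Icc 1 K, c t < cbar m l) → t ∈ 𝒯 := by
    rintro ⟨l, hl, hlt⟩
    apply hWT m hm'
    rw [hWc m hm' K (Finset.mem_Icc.2 ⟨hK, le_rfl⟩)]
    exact (hlt.trans_le (hcbar m hm' (Finset.mem_Icc.1 hl) ⟨hK, le_rfl⟩
      (Finset.mem_Icc.1 hl).2)).le
  have hb := sum_sub_succ_mem_Icc hβ (Finset.filter_subset (fun l => c t < cbar m l) (Icc 1 K))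
  rw [hβ1, hβK1, sub_zero] at hb
  refine ⟨_, hb, ?_, ?_⟩
  · by_cases h : ∃ l ∈ Icc 1 K, c t < cbar m l
    · exact Or.inr ⟨hT h, hm1⟩
    · push Not at h
      left
      rw [Finset.filter_false_of_mem fun l hl => (h l hl).not_gt, Finset.sum_empty]
  · simp_rw [hS m hm']
    exact (hasDerivAt_cumToll_comp hc (fun l hl => (ht m hm' l hl).symm)
      fun h => hdiff t (hT h)).congr_deriv (neg_mul _ _)

theorem hasDerivAt_sigma (hiP : iP ∈ Icc 1 N)
    (hwP1 : ∀ i ∈ Icc 1 N, i ∈ Icc iP N → ∀ t, wP i t = 0)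
    (hwP2 : ∀ i ∈ Icc 1 N, i ∉ Icc iP N → ∀ t, wP i t = pSO i t) {t : ℝ}
    (hSd : ∀ m ≤ N, ∃ b ∈ Set.Icc (0 : ℝ) 1, (b = 0 ∨ (t ∈ 𝒯 ∧ 1 ≤ m)) ∧
      HasDerivAt (fun s => ∑ j ∈ Icc 1 m, pSO j s) (-(b * deriv c t)) t)
    {i : ℕ} (hi : i ≤ N) :
    ∃ b ∈ Set.Icc (0 : ℝ) 1, (b = 0 ∨ (t ∈ 𝒯 ∧ 1 < N)) ∧
      HasDerivAt (sigma wP i) (1 + b * deriv c t) t := by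
  have hiP' := Finset.mem_Icc.1 hiP
  obtain ⟨b, hb, hbT, hd⟩ := hSd (min i (iP - 1)) (by omega)
  refine ⟨b, hb, hbT.imp_right fun h => ⟨h.1, by omega⟩, ?_⟩
  have hσ : sigma wP i = fun s => s - ∑ j ∈ Icc 1 (min i (iP - 1)), pSO j s := by
    funext s
    rw [sigma, sum_wP_eq hwP1 hwP2 hi]
  rw [hσ]
  exact ((hasDerivAt_id t).sub hd).congr_deriv (by simp)

theorem differentiableAt_wP (hwP1 : ∀ i ∈ Icc 1 N, i ∈ Icc iP N → ∀ t, wP i t = 0)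
    (hwP2 : ∀ i ∈ Icc 1 N, i ∉ Icc iP N → ∀ t, wP i t = pSO i t) {t : ℝ}
    (hSd : ∀ m ≤ N, DifferentiableAt ℝ (fun s => ∑ j ∈ Icc 1 m, pSO j s) t)
    {j : ℕ} (hj : j ∈ Icc 1 N) : DifferentiableAt ℝ (wP j) t := by
  obtain ⟨hj1, hjN⟩ := Finset.mem_Icc.1 hj
  have hw : wP j = fun s => if j < iP then
      ∑ l ∈ Icc 1 j, pSO l s - ∑ l ∈ Icc 1 (j - 1), pSO l s else 0 := by
    funext s
    rw [wP_eq_ite hwP1 hwP2 hj]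
    obtain ⟨j, rfl⟩ : ∃ j', j = j' + 1 := ⟨j - 1, by omega⟩
    rw [Finset.sum_Icc_succ_top (by omega), Nat.add_sub_cancel, add_sub_cancel_left]
  rw [hw]
  split_ifs
  · exact (hSd j hjN).sub (hSd (j - 1) (by omega))
  · exact differentiableAt_const 0

end PBP

section QRP

variable {N : ℕ} {c : ℝ → ℝ} {μ : ℕ → ℝ} {wP : ℕ → ℝ → ℝ} {𝒯 : Set ℝ} {t : ℝ}

theorem deriv_sigma_pos (hμpos : ∀ i ∈ Icc 1 N, 0 < μ i)
    (hQRP : ∀ i, 1 ≤ i → i < N → ∀ t ∈ 𝒯,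
      μ (i + 1) / μ i - 1 < deriv c t ∧ deriv c t < μ i / μ (i + 1) - 1)
    (hσ : ∀ i ≤ N, ∃ b ∈ Set.Icc (0 : ℝ) 1, (b = 0 ∨ (t ∈ 𝒯 ∧ 1 < N)) ∧
      HasDerivAt (sigma wP i) (1 + b * deriv c t) t)
    {i : ℕ} (hi : i ≤ N) : 0 < deriv (sigma wP i) t := by
  obtain ⟨b, hb, hbT, hd⟩ := hσ i hi
  rw [hd.deriv]
  rcases hbT with rfl | ⟨hT, hN⟩
  · simp
  refine one_add_mul_pos hb ?_
  have := div_pos (hμpos 2 (Finset.mem_Icc.2 ⟨by omega, hN⟩))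
    (hμpos 1 (Finset.mem_Icc.2 ⟨le_rfl, hN.le⟩))
  linarith [(hQRP 1 le_rfl hN t hT).1]

theorem mul_deriv_sigma_succ_le (hμpos : ∀ i ∈ Icc 1 N, 0 < μ i)
    (hgap : ∀ i ∈ Icc 1 N, μ (i + 1) < μ i) (hμtop : μ (N + 1) = 0)
    (hQRP : ∀ i, 1 ≤ i → i < N → ∀ t ∈ 𝒯,
      μ (i + 1) / μ i - 1 < deriv c t ∧ deriv c t < μ i / μ (i + 1) - 1)
    (hσ : ∀ i ≤ N, ∃ b ∈ Set.Icc (0 : ℝ) 1, (b = 0 ∨ (t ∈ 𝒯 ∧ 1 < N)) ∧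
      HasDerivAt (sigma wP i) (1 + b * deriv c t) t)
    {j : ℕ} (hj : j ∈ Icc 1 N) :
    μ (j + 1) * deriv (sigma wP (j + 1)) t ≤ μ j * deriv (sigma wP j) t := by
  obtain ⟨hj1, hjN⟩ := Finset.mem_Icc.1 hj
  rcases hjN.lt_or_eq with hjN | rfl
  · obtain ⟨b₁, hb₁, hb₁T, hd₁⟩ := hσ j hjN.le
    obtain ⟨b₂, hb₂, hb₂T, hd₂⟩ := hσ (j + 1) hjN
    have hμj := hgap j hj
    rw [hd₁.deriv, hd₂.deriv]
    by_cases hT : t ∈ 𝒯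
    · exact (mul_one_add_mul_lt (hμpos (j + 1) (Finset.mem_Icc.2 ⟨by omega, hjN⟩)) hμj
        (hQRP j hj1 hjN t hT).1 (hQRP j hj1 hjN t hT).2 hb₁ hb₂).le
    · rw [hb₁T.resolve_right fun h => hT h.1, hb₂T.resolve_right fun h => hT h.1]
      simpa using hμj.le
  · rw [hμtop, zero_mul]
    exact (mul_pos (hμpos _ hj) (deriv_sigma_pos hμpos hQRP hσ le_rfl)).le

theorem deriv_sigma_le
    (hQRP : ∀ i, 1 ≤ i → i < N → ∀ t ∈ 𝒯,
      μ (i + 1) / μ i - 1 < deriv c t ∧ deriv c t < μ i / μ (i + 1) - 1)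
    (hσ : ∀ i ≤ N, ∃ b ∈ Set.Icc (0 : ℝ) 1, (b = 0 ∨ (t ∈ 𝒯 ∧ 1 < N)) ∧
      HasDerivAt (sigma wP i) (1 + b * deriv c t) t)
    {i : ℕ} (hi : i ≤ N) : deriv (sigma wP i) t ≤ 1 + |μ 1 / μ 2| := by
  obtain ⟨b, hb, hbT, hd⟩ := hσ i hi
  rw [hd.deriv]
  rcases hbT with rfl | ⟨hT, hN⟩
  · simp
  have hhi := (hQRP 1 le_rfl hN t hT).2
  have habs := le_abs_self (μ 1 / μ 2)
  rcases le_total 0 (deriv c t) with h | h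
  · nlinarith [hb.1, hb.2]
  · nlinarith [hb.1, hb.2, abs_nonneg (μ 1 / μ 2)]

end QRP

section Equilibrium

variable {N K iP : ℕ} {c : ℝ → ℝ} {β μ d : ℕ → ℝ} {Q tm tp cbar ρSO ρP : ℕ → ℕ → ℝ}
  {W : ℕ → ℕ → Set ℝ} {pSO wP : ℕ → ℝ → ℝ} {qP : ℕ → ℕ → ℝ → ℝ} {𝒯 B : Set ℝ}

theorem pbp_departure_complementarity (hB : B.Countable)
    (hg : ∀ t ∉ B, ∀ j ∈ Icc 1 N,
      μ (j + 1) * deriv (sigma wP (j + 1)) t ≤ μ j * deriv (sigma wP j) t)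
    (hsplit : ∀ i ≤ N, ∀ s,
      ∑ j ∈ Icc 1 i, wP j s + ∑ j ∈ Icc iP i, pSO j s = ∑ j ∈ Icc 1 i, pSO j s)
    (hS : ∀ m ∈ Icc 1 N, ∀ t, ∑ j ∈ Icc 1 m, pSO j t = cumToll K β (cbar m) (c t))
    (hβK1 : β (K + 1) = 0) (hβ : ∀ l ∈ Icc 1 K, β (l + 1) ≤ β l)
    (hρSO : ∀ i ∈ Icc 1 N, ∀ k ∈ Icc 1 K,
      ρSO i k = (∑ l ∈ Icc k K, (β l - β (l + 1)) * cbar i l) + d i)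
    (hpSO : ∀ i ∈ Icc 1 N, ∀ k ∈ Icc 1 K, ∀ t ∈ W i k \ W i (k - 1),
      pSO i t = ρSO i k - β k * c t - d i - ∑ j ∈ Icc 1 (i - 1), pSO j t)
    (hρP : ∀ i k, ρP i k = ρSO i k)
    (hqP : ∀ i ∈ Icc 1 N, ∀ k ∈ Icc 1 K, ∀ t ∈ W i k \ W i (k - 1),
      qP i k t =
        μ i * deriv (fun s => s - ∑ j ∈ Icc 1 i, wP j s) t -
        μ (i + 1) * deriv (fun s => s - ∑ j ∈ Icc 1 (i + 1), wP j s) t)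
    (hqP0 : ∀ i ∈ Icc 1 N, ∀ k ∈ Icc 1 K, ∀ t, t ∉ W i k \ W i (k - 1) → qP i k t = 0) :
    ∀ i ∈ Icc 1 N, ∀ k ∈ Icc 1 K, ∀ᵐ t ∂(volume.restrict 𝒯),
      0 ≤ qP i k t ∧
      0 ≤ (∑ j ∈ Icc 1 i, wP j t) + β k * c t + (∑ j ∈ Icc iP i, pSO j t) + d i - ρP i k ∧
      qP i k t * ((∑ j ∈ Icc 1 i, wP j t) + β k * c t +
        (∑ j ∈ Icc iP i, pSO j t) + d i - ρP i k) = 0 := by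
  intro i hi k hk
  filter_upwards [ae_restrict_of_ae (hB.ae_notMem volume)] with t ht
  have hcost : (∑ j ∈ Icc 1 i, wP j t) + β k * c t + (∑ j ∈ Icc iP i, pSO j t) + d i - ρP i k
      = ∑ j ∈ Icc 1 i, pSO j t - (ρSO i k - β k * c t - d i) := by
    rw [hρP, ← hsplit i (Finset.mem_Icc.1 hi).2 t]
    ring
  rw [hcost]
  by_cases hring : t ∈ W i k \ W i (k - 1)
  · rw [sum_pSO_of_mem_ring hpSO hi hk hring, sub_self, mul_zero, hqP i hi k hk t hring]
    exact ⟨sub_nonneg.2 (hg t ht i hi), le_rfl, rfl⟩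
  · rw [hqP0 i hi k hk t hring, zero_mul, hS i hi t, hρSO i hi k hk]
    refine ⟨le_rfl, ?_, rfl⟩
    linarith [sub_le_cumToll (x := cbar i) (v := c t) hβK1 hβ hk]

theorem pbp_queue_complementarity (hB : B.Countable)
    (hg : ∀ t ∉ B, ∀ j ∈ Icc 1 N,
      μ (j + 1) * deriv (sigma wP (j + 1)) t ≤ μ j * deriv (sigma wP j) t)
    (hp : ∀ t ∉ B, ∀ j ∈ Icc 1 N, 0 ≤ pSO j t) (hμtop : μ (N + 1) = 0) (hK : 1 ≤ K)
    (hW0 : ∀ i, W i 0 = ∅) (hWc : ∀ i ∈ Icc 1 N, ∀ k ∈ Icc 1 K, W i k = {t | c t ≤ cbar i k})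
    (hWmono : ∀ i ∈ Icc 1 N, MonotoneOn (W i) (Set.Iic K))
    (hnest : MonotoneOn (fun i => cbar i K) (Set.Icc 1 N))
    (hpSO0 : ∀ i ∈ Icc 1 N, ∀ t ∉ W i K, pSO i t = 0)
    (hwP2 : ∀ i ∈ Icc 1 N, i ∉ Icc iP N → ∀ t, wP i t = pSO i t)
    (hqP : ∀ i ∈ Icc 1 N, ∀ k ∈ Icc 1 K, ∀ t ∈ W i k \ W i (k - 1),
      qP i k t =
        μ i * deriv (fun s => s - ∑ j ∈ Icc 1 i, wP j s) t -
        μ (i + 1) * deriv (fun s => s - ∑ j ∈ Icc 1 (i + 1), wP j s) t)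
    (hqP0 : ∀ i ∈ Icc 1 N, ∀ k ∈ Icc 1 K, ∀ t, t ∉ W i k \ W i (k - 1) → qP i k t = 0) :
    ∀ i ∈ Icc 1 N, i ∉ Icc iP N → ∀ᵐ t ∂(volume.restrict 𝒯),
      0 ≤ wP i t ∧
      0 ≤ μ i * deriv (fun s => s - ∑ j ∈ Icc 1 i, wP j s) t -
        ∑ j ∈ Icc i N, ∑ k ∈ Icc 1 K, qP j k t ∧
      wP i t * (μ i * deriv (fun s => s - ∑ j ∈ Icc 1 i, wP j s) t -
        ∑ j ∈ Icc i N, ∑ k ∈ Icc 1 K, qP j k t) = 0 := by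
  intro i hi hiP
  filter_upwards [ae_restrict_of_ae (hB.ae_notMem volume)] with t ht
  set g : ℕ → ℝ := fun j => μ j * deriv (sigma wP j) t
  have hi' := Finset.mem_Icc.1 hi
  have hKK : K ∈ Icc 1 K := Finset.mem_Icc.2 ⟨hK, le_rfl⟩
  have hrow : ∀ j ∈ Icc i N,
      ∑ k ∈ Icc 1 K, qP j k t = if c t ≤ cbar j K then g j - g (j + 1) else 0 := by
    intro j hj
    have hj : j ∈ Icc 1 N := Finset.Icc_subset_Icc_left hi'.1 hj
    have hind : ∀ k ∈ Icc 1 K,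
        qP j k t = (W j k \ W j (k - 1)).indicator (fun _ => g j - g (j + 1)) t := by
      intro k hk
      by_cases h : t ∈ W j k \ W j (k - 1)
      · rw [Set.indicator_of_mem h, hqP j hj k hk t h]
        rfl
      · rw [Set.indicator_of_notMem h, hqP0 j hj k hk t h]
    rw [Finset.sum_congr rfl hind, sum_indicator_sdiff_pred (hW0 j) _ t (hWmono j hj),
      hWc j hj K hKK, Set.indicator_apply]
    exact if_congr Iff.rfl rfl rfl
  have hgN : g (N + 1) = 0 := by simp [g, hμtop]
  have hwi : wP i t = pSO i t := hwP2 i hi hiP t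
  change 0 ≤ wP i t ∧ 0 ≤ g i - _ ∧ wP i t * (g i - _) = 0
  rw [Finset.sum_congr rfl hrow]
  refine ⟨hwi ▸ hp t ht i hi, ?_, ?_⟩
  · have := sum_ite_sub_succ_le (g := g) (P := fun j => c t ≤ cbar j K) (by omega)
      fun j hj => hg t ht j (Finset.Icc_subset_Icc_left hi'.1 hj)
    linarith
  · by_cases hti : c t ≤ cbar i K
    · rw [sum_ite_sub_succ_eq (by omega) fun j hj => hti.trans (hnest hi'
        (Finset.mem_Icc.1 (Finset.Icc_subset_Icc_left hi'.1 hj)) (Finset.mem_Icc.1 hj).1), hgN]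
      ring
    · rw [hwi, hpSO0 i hi t (by rw [hWc i hi K hKK]; exact hti), zero_mul]

theorem setIntegral_window_eq_sum (hB : B.Countable) (hc : Continuous c)
    (hwin : ∀ i ∈ Icc 1 N, ∀ k ∈ Icc 1 K,
      tm i k ≤ tp i k ∧ tp i k - tm i k = (∑ l ∈ Icc 1 k, Q i l) / (μ i - μ (i + 1)) ∧
      c (tm i k) = cbar i k ∧ c (tp i k) = cbar i k)
    (hW0 : ∀ i, W i 0 = ∅)
    (hW : ∀ i ∈ Icc 1 N, ∀ k ∈ Icc 1 K, W i k = Set.Icc (tm i k) (tp i k))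
    (hgap : ∀ i ∈ Icc 1 N, μ (i + 1) < μ i)
    (hσ : ∀ j ≤ N, ∃ F : ℝ → ℝ, Continuous F ∧ ∀ s, sigma wP j s = s - F (c s))
    (hσd : ∀ s ∉ B, ∀ j ≤ N, DifferentiableAt ℝ (sigma wP j) s)
    {i j : ℕ} (hi : i ∈ Icc 1 N) (hj : j ≤ N)
    (hWmono : MonotoneOn (W i) (Set.Iic K))
    (hint : IntegrableOn (fun s => μ i * deriv (sigma wP i) s - μ (i + 1) * deriv (sigma wP j) s)
      (W i K)) {k : ℕ} (hk : k ≤ K) :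
    ∫ s in W i k, (μ i * deriv (sigma wP i) s - μ (i + 1) * deriv (sigma wP j) s) =
      ∑ l ∈ Icc 1 k, Q i l := by
  rcases Nat.eq_zero_or_pos k with rfl | hk1
  · simp [hW0]
  have hk' : k ∈ Icc 1 K := Finset.mem_Icc.2 ⟨hk1, hk⟩
  obtain ⟨hle, hlen, hm, hp⟩ := hwin i hi k hk'
  have hends : ∀ l ≤ N, sigma wP l (tp i k) - sigma wP l (tm i k) = tp i k - tm i k := by
    intro l hl
    obtain ⟨F, -, hF⟩ := hσ l hl
    rw [hF, hF, hm, hp]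
    ring
  have hcont : ∀ l ≤ N, Continuous (sigma wP l) := by
    intro l hl
    obtain ⟨F, hFc, hF⟩ := hσ l hl
    rw [funext hF]
    fun_prop
  have hsub := hWmono (Set.mem_Iic.2 hk) Set.self_mem_Iic hk
  rw [hW i hi k hk'] at hsub ⊢
  rw [setIntegral_Icc_sub_mul_deriv hle hB (hcont i (Finset.mem_Icc.1 hi).2)
    (hcont j hj) (fun s hs => hσd s hs i (Finset.mem_Icc.1 hi).2) (fun s hs => hσd s hs j hj)
    (hends i (Finset.mem_Icc.1 hi).2) (hends j hj) (hint.mono_set hsub), hlen,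
    mul_div_cancel₀ _ (sub_pos.2 (hgap i hi)).ne']

theorem pbp_demand_conservation (hB : B.Countable) (hc : Continuous c)
    (hwin : ∀ i ∈ Icc 1 N, ∀ k ∈ Icc 1 K,
      tm i k ≤ tp i k ∧ tp i k - tm i k = (∑ l ∈ Icc 1 k, Q i l) / (μ i - μ (i + 1)) ∧
      c (tm i k) = cbar i k ∧ c (tp i k) = cbar i k)
    (hW0 : ∀ i, W i 0 = ∅)
    (hW : ∀ i ∈ Icc 1 N, ∀ k ∈ Icc 1 K, W i k = Set.Icc (tm i k) (tp i k))
    (hWT : ∀ i ∈ Icc 1 N, W i K ⊆ 𝒯) (hWmono : ∀ i ∈ Icc 1 N, MonotoneOn (W i) (Set.Iic K))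
    (hgap : ∀ i ∈ Icc 1 N, μ (i + 1) < μ i) (hμtop : μ (N + 1) = 0)
    (hσ : ∀ j ≤ N, ∃ F : ℝ → ℝ, Continuous F ∧ ∀ s, sigma wP j s = s - F (c s))
    (hσd : ∀ s ∉ B, ∀ j ≤ N, DifferentiableAt ℝ (sigma wP j) s) {C : ℝ}
    (hσC : ∀ s ∉ B, ∀ j ≤ N, |deriv (sigma wP j) s| ≤ C)
    (hqP : ∀ i ∈ Icc 1 N, ∀ k ∈ Icc 1 K, ∀ t ∈ W i k \ W i (k - 1),
      qP i k t =
        μ i * deriv (fun s => s - ∑ j ∈ Icc 1 i, wP j s) t -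
        μ (i + 1) * deriv (fun s => s - ∑ j ∈ Icc 1 (i + 1), wP j s) t)
    (hqP0 : ∀ i ∈ Icc 1 N, ∀ k ∈ Icc 1 K, ∀ t, t ∉ W i k \ W i (k - 1) → qP i k t = 0) :
    ∀ i ∈ Icc 1 N, ∀ k ∈ Icc 1 K, ∫ t in 𝒯, qP i k t = Q i k := by
  intro i hi k hk
  have hi' := Finset.mem_Icc.1 hi
  have hk' := Finset.mem_Icc.1 hk
  set j := min (i + 1) N
  have hjN : j ≤ N := min_le_right _ _
  set φ := fun s => μ i * deriv (sigma wP i) s - μ (i + 1) * deriv (sigma wP j) s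
  -- `σ_{N+1}` is unconstrained, but it only enters multiplied by `μ (N + 1) = 0`.
  have hnext : ∀ s, μ (i + 1) * deriv (fun s => s - ∑ l ∈ Icc 1 (i + 1), wP l s) s =
      μ (i + 1) * deriv (sigma wP j) s := by
    intro s
    rcases hi'.2.lt_or_eq with h | h
    · rw [show j = i + 1 from min_eq_left h]
      rfl
    · rw [h, hμtop, zero_mul, zero_mul]
  have hq : qP i k = (W i k \ W i (k - 1)).indicator φ := by
    funext t
    by_cases ht : t ∈ W i k \ W i (k - 1)
    · rw [Set.indicator_of_mem ht, hqP i hi k hk t ht, hnext]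
      rfl
    · rw [Set.indicator_of_notMem ht, hqP0 i hi k hk t ht]
  have hint : IntegrableOn φ (W i K) := by
    rw [hW i hi K (Finset.mem_Icc.2 ⟨hk'.1.trans hk'.2, le_rfl⟩)]
    refine integrableOn_Icc_of_abs_le hB (((measurable_deriv _).const_mul _).sub
      ((measurable_deriv _).const_mul _)) (C := |μ i| * C + |μ (i + 1)| * C) (fun s hs => ?_) _ _
    calc |φ s| ≤ |μ i| * |deriv (sigma wP i) s| + |μ (i + 1)| * |deriv (sigma wP j) s| := by
          simpa only [abs_mul] using
            abs_sub (μ i * deriv (sigma wP i) s) (μ (i + 1) * deriv (sigma wP j) s)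
      _ ≤ |μ i| * C + |μ (i + 1)| * C := by
          gcongr
          exacts [hσC s hs i hi'.2, hσC s hs j hjN]
  have hmeas : ∀ k' ≤ K, MeasurableSet (W i k') := by
    intro k' hk''
    rcases Nat.eq_zero_or_pos k' with rfl | hk1
    · rw [hW0]
      exact MeasurableSet.empty
    · rw [hW i hi k' (Finset.mem_Icc.2 ⟨hk1, hk''⟩)]
      exact measurableSet_Icc
  have hsum : ∀ k' ≤ K, ∫ t in W i k', φ t = ∑ l ∈ Icc 1 k', Q i l := fun k' hk'' =>
    setIntegral_window_eq_sum hB hc hwin hW0 hW hgap hσ hσd hi hjN (hWmono i hi) hint hk''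
  have hring : W i k \ W i (k - 1) ⊆ 𝒯 := fun t ht =>
    hWT i hi (hWmono i hi (Set.mem_Iic.2 hk'.2) Set.self_mem_Iic hk'.2 ht.1)
  calc ∫ t in 𝒯, qP i k t = ∫ t in W i k \ W i (k - 1), φ t := by
        rw [hq, setIntegral_indicator ((hmeas k hk'.2).diff (hmeas (k - 1) (by omega))),
          Set.inter_eq_right.2 hring]
    _ = (∫ t in W i k, φ t) - ∫ t in W i (k - 1), φ t := by
        have hkK : k - 1 ≤ K := by omega
        exact setIntegral_sdiff (hmeas (k - 1) hkK)
          (hint.mono_set (hWmono i hi (Set.mem_Iic.2 hk'.2) Set.self_mem_Iic hk'.2))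
          (hWmono i hi (Set.mem_Iic.2 hkK) (Set.mem_Iic.2 hk'.2) (Nat.sub_le k 1))
    _ = Q i k := by
        rw [hsum k hk'.2, hsum (k - 1) (by omega)]
        obtain ⟨k, rfl⟩ : ∃ k', k = k' + 1 := ⟨k - 1, by omega⟩
        rw [Finset.sum_Icc_succ_top (by omega), Nat.add_sub_cancel]
        ring

theorem pbp_consistency (hB : B.Countable)
    (hpos : ∀ t ∉ B, ∀ i ≤ N, 0 < deriv (sigma wP i) t)
    (hwd : ∀ t ∉ B, ∀ j ∈ Icc 1 N, DifferentiableAt ℝ (wP j) t) :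
    ∀ i ∈ Icc 1 N, ∀ᵐ t ∂(volume.restrict 𝒯), 0 < 1 - ∑ j ∈ Icc 1 i, deriv (wP j) t := by
  intro i hi
  filter_upwards [ae_restrict_of_ae (hB.ae_notMem volume)] with t ht
  have hd : ∀ j ∈ Icc 1 i, DifferentiableAt ℝ (wP j) t := fun j hj =>
    hwd t ht j (Finset.Icc_subset_Icc_right (Finset.mem_Icc.1 hi).2 hj)
  have h := hpos t ht i (Finset.mem_Icc.1 hi).2
  change 0 < deriv (fun s => s - ∑ j ∈ Icc 1 i, wP j s) t at h
  rwa [deriv_fun_sub differentiableAt_fun_id (DifferentiableAt.fun_sum hd), deriv_id'',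
    deriv_fun_sum hd] at h

end Equilibrium

theorem pbp_equilibrium_general
    (N K : ℕ) (hK : 1 ≤ K)
    (𝒯 : Set ℝ)
    -- base schedule delay cost function
    (c : ℝ → ℝ) (hccont : Continuous c)
    (hcdec : StrictAntiOn c (Set.Iic (0 : ℝ)))
    (hcinc : StrictMonoOn c (Set.Ici (0 : ℝ)))
    -- heterogeneity parameters 1 = β¹ > … > β^K > 0, β^(K+1) = 0
    (β : ℕ → ℝ) (hβ1 : β 1 = 1)
    (hβdec : ∀ k, 1 ≤ k → k < K → β (k + 1) < β k)
    (hβpos : ∀ k ∈ Finset.Icc 1 K, 0 < β k) (hβK1 : β (K + 1) = 0)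
    -- capacities μ₁ > … > μ_N > 0, μ_(N+1) = 0
    (μ : ℕ → ℝ) (hμdec : ∀ i, 1 ≤ i → i < N → μ (i + 1) < μ i)
    (hμpos : ∀ i ∈ Finset.Icc 1 N, 0 < μ i) (hμtop : μ (N + 1) = 0)
    -- free-flow travel times 0 ≤ d₁ < … < d_N
    (d : ℕ → ℝ)
    -- demands
    (Q : ℕ → ℕ → ℝ) (hQ : ∀ i ∈ Finset.Icc 1 N, ∀ k ∈ Finset.Icc 1 K, 0 < Q i k)
    -- group arrival windows 𝒯_(i,k) = Γ(T_(i,k)) = [t⁻_(i,k), t⁺_(i,k)] of length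
    -- T_(i,k) = (Σ_(l≤k) Q_(i,l))/(μ_i − μ_(i+1)) with equal endpoint costs c̄(T_(i,k))
    (tm tp : ℕ → ℕ → ℝ) (cbar : ℕ → ℕ → ℝ)
    (hwin : ∀ i ∈ Finset.Icc 1 N, ∀ k ∈ Finset.Icc 1 K,
      tm i k ≤ tp i k ∧
      tp i k - tm i k = (∑ l ∈ Finset.Icc 1 k, Q i l) / (μ i - μ (i + 1)) ∧
      c (tm i k) = cbar i k ∧ c (tp i k) = cbar i k)
    (W : ℕ → ℕ → Set ℝ) (hW0 : ∀ i, W i 0 = ∅)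
    (hW : ∀ i ∈ Finset.Icc 1 N, ∀ k ∈ Finset.Icc 1 K, W i k = Set.Icc (tm i k) (tp i k))
    (hWT : ∀ i ∈ Finset.Icc 1 N, W i K ⊆ 𝒯)
    -- the explicit DSO equilibrium costs ρ^SO
    (ρSO : ℕ → ℕ → ℝ)
    (hρSO : ∀ i ∈ Finset.Icc 1 N, ∀ k ∈ Finset.Icc 1 K,
      ρSO i k = (∑ l ∈ Finset.Icc k K, (β l - β (l + 1)) * cbar i l) + d i)
    -- the explicit DSO prices p^SO, defined recursively on the group windows
    (pSO : ℕ → ℝ → ℝ)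
    (hpSO : ∀ i ∈ Finset.Icc 1 N, ∀ k ∈ Finset.Icc 1 K, ∀ t ∈ W i k \ W i (k - 1),
      pSO i t = ρSO i k - β k * c t - d i - ∑ j ∈ Finset.Icc 1 (i - 1), pSO j t)
    (hpSO0 : ∀ i ∈ Finset.Icc 1 N, ∀ t ∉ W i K, pSO i t = 0)
    -- Assumption 1 for the explicit DSO solution: p^SO_i(t) > 0 exactly on the
    -- interior of the interval 𝒯_(i,K)
    (hA1 : ∀ i ∈ Finset.Icc 1 N, ∀ t ∈ 𝒯,
      (0 < pSO i t ↔ t ∈ Set.Ioo (tm i K) (tp i K)))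
    -- QRP condition: c is differentiable on 𝒯 and
    -- μ_(i+1)/μ_i − 1 < c′(t) < μ_i/μ_(i+1) − 1
    (hdiff : ∀ t ∈ 𝒯, DifferentiableAt ℝ c t)
    (hQRP : ∀ i, 1 ≤ i → i < N → ∀ t ∈ 𝒯,
      μ (i + 1) / μ i - 1 < deriv c t ∧ deriv c t < μ i / μ (i + 1) - 1)
    -- Assumption 2: the pricing bottleneck set is 𝒩^P = Finset.Icc iP N
    (iP : ℕ) (hiP : iP ∈ Finset.Icc 1 N)
    -- PBP queueing delays: zero at priced bottlenecks, p^SO elsewhere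
    (wP : ℕ → ℝ → ℝ)
    (hwP1 : ∀ i ∈ Finset.Icc 1 N, i ∈ Finset.Icc iP N → ∀ t, wP i t = 0)
    (hwP2 : ∀ i ∈ Finset.Icc 1 N, i ∉ Finset.Icc iP N → ∀ t, wP i t = pSO i t)
    -- PBP equilibrium costs and flows
    (ρP : ℕ → ℕ → ℝ) (hρP : ∀ i k, ρP i k = ρSO i k)
    (qP : ℕ → ℕ → ℝ → ℝ)
    (hqP : ∀ i ∈ Finset.Icc 1 N, ∀ k ∈ Finset.Icc 1 K, ∀ t ∈ W i k \ W i (k - 1),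
      qP i k t =
        μ i * deriv (fun s => s - ∑ j ∈ Finset.Icc 1 i, wP j s) t -
        μ (i + 1) * deriv (fun s => s - ∑ j ∈ Finset.Icc 1 (i + 1), wP j s) t)
    (hqP0 : ∀ i ∈ Finset.Icc 1 N, ∀ k ∈ Finset.Icc 1 K, ∀ t,
      t ∉ W i k \ W i (k - 1) → qP i k t = 0) :
    -- (i) departure-time choice complementarity with tolls at priced bottlenecks
    (∀ i ∈ Finset.Icc 1 N, ∀ k ∈ Finset.Icc 1 K,
      ∀ᵐ t ∂(MeasureTheory.volume.restrict 𝒯),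
        0 ≤ qP i k t ∧
        0 ≤ (∑ j ∈ Finset.Icc 1 i, wP j t) + β k * c t +
            (∑ j ∈ Finset.Icc iP i, pSO j t) + d i - ρP i k ∧
        qP i k t * ((∑ j ∈ Finset.Icc 1 i, wP j t) + β k * c t +
            (∑ j ∈ Finset.Icc iP i, pSO j t) + d i - ρP i k) = 0) ∧
    -- (ii) queueing complementarity at the unpriced bottlenecks
    (∀ i ∈ Finset.Icc 1 N, i ∉ Finset.Icc iP N →
      ∀ᵐ t ∂(MeasureTheory.volume.restrict 𝒯),
        0 ≤ wP i t ∧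
        0 ≤ μ i * deriv (fun s => s - ∑ j ∈ Finset.Icc 1 i, wP j s) t -
            ∑ j ∈ Finset.Icc i N, ∑ k ∈ Finset.Icc 1 K, qP j k t ∧
        wP i t * (μ i * deriv (fun s => s - ∑ j ∈ Finset.Icc 1 i, wP j s) t -
            ∑ j ∈ Finset.Icc i N, ∑ k ∈ Finset.Icc 1 K, qP j k t) = 0) ∧
    -- (iii) demand conservation
    (∀ i ∈ Finset.Icc 1 N, ∀ k ∈ Finset.Icc 1 K, ∫ t in 𝒯, qP i k t = Q i k) ∧
    -- (iv) consistency
    (∀ i ∈ Finset.Icc 1 N, ∀ᵐ t ∂(MeasureTheory.volume.restrict 𝒯),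
        0 < 1 - ∑ j ∈ Finset.Icc 1 i, deriv (wP j) t) := by
  have hgap := succ_lt_of_pos_of_top_eq_zero hμdec hμpos hμtop
  have hβ : ∀ l ∈ Icc 1 K, β (l + 1) ≤ β l := fun l hl =>
    (succ_lt_of_pos_of_top_eq_zero hβdec hβpos hβK1 l hl).le
  have hKK : K ∈ Icc 1 K := Finset.mem_Icc.2 ⟨hK, le_rfl⟩
  obtain ⟨hWc, hcbar, hnest, hS, hp, hB⟩ := dso_solution_structure hcdec hcinc hK hβK1 hβ
    (hβpos K hKK) hgap hQ hwin hW0 hW hWT hρSO hpSO hpSO0 hA1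
  have hWmono := window_monotoneOn hW0 hWc hcbar
  set B := {t | ∃ i ∈ Icc 1 N, ∃ k ∈ Icc 1 K, c t = cbar i k}
  have hSd := fun t (ht : t ∉ B) m (hm : m ≤ N) => hasDerivAt_sum_pSO hccont hdiff hβ1 hβK1 hβ
    hK hWc hWT hcbar hS hm fun i hi k hk h => ht ⟨i, hi, k, hk, h⟩
  have hσ := fun t ht i (hi : i ≤ N) => hasDerivAt_sigma hiP hwP1 hwP2 (hSd t ht) hi
  have hpos := fun t ht i (hi : i ≤ N) => deriv_sigma_pos hμpos hQRP (hσ t ht) hi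
  have hg := fun t ht j (hj : j ∈ Icc 1 N) =>
    mul_deriv_sigma_succ_le hμpos hgap hμtop hQRP (hσ t ht) hj
  refine ⟨pbp_departure_complementarity hB hg
      (fun i hi => sum_wP_add_sum_pSO (Finset.mem_Icc.1 hiP).1 hwP1 hwP2 hi) hS hβK1 hβ hρSO hpSO
      hρP hqP hqP0,
    pbp_queue_complementarity hB hg (fun t ht j hj => hp j hj t fun h => ht ⟨j, hj, K, hKK, h⟩)
      hμtop hK hW0 hWc hWmono hnest hpSO0 hwP2 hqP hqP0,
    pbp_demand_conservation hB hccont hwin hW0 hW hWT hWmono hgap hμtop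
      (fun j hj => sigma_eq_sub_comp hwP1 hwP2 hS hj)
      (fun t ht j hj => by obtain ⟨_, -, -, h⟩ := hσ t ht j hj; exact h.differentiableAt)
      (fun t ht j hj => abs_le.2 ⟨by linarith [hpos t ht j hj, abs_nonneg (μ 1 / μ 2)],
        deriv_sigma_le hQRP (hσ t ht) hj⟩) hqP hqP0,
    pbp_consistency hB hpos fun t ht j hj => differentiableAt_wP hwP1 hwP2
      (fun m hm => by obtain ⟨_, -, -, h⟩ := hSd t ht m hm; exact h.differentiableAt) hj⟩

/-- Lemma 6 of the paper: equilibrium under partial bottleneck pricing (PBP) with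
pricing bottleneck set 𝒩^P = {i^P, …, N} (Assumption 2). -/
theorem pbp_equilibrium
    (N K : ℕ) (hN : 1 ≤ N) (hK : 1 ≤ K)
    (𝒯 : Set ℝ)
    -- base schedule delay cost function
    (c : ℝ → ℝ) (hc0 : c 0 = 0) (hccont : Continuous c)
    (hcdec : StrictAntiOn c (Set.Iic (0 : ℝ)))
    (hcinc : StrictMonoOn c (Set.Ici (0 : ℝ)))
    -- heterogeneity parameters 1 = β¹ > … > β^K > 0, β^(K+1) = 0
    (β : ℕ → ℝ) (hβ1 : β 1 = 1)
    (hβdec : ∀ k, 1 ≤ k → k < K → β (k + 1) < β k)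
    (hβpos : ∀ k ∈ Finset.Icc 1 K, 0 < β k) (hβK1 : β (K + 1) = 0)
    -- capacities μ₁ > … > μ_N > 0, μ_(N+1) = 0
    (μ : ℕ → ℝ) (hμdec : ∀ i, 1 ≤ i → i < N → μ (i + 1) < μ i)
    (hμpos : ∀ i ∈ Finset.Icc 1 N, 0 < μ i) (hμtop : μ (N + 1) = 0)
    -- free-flow travel times 0 ≤ d₁ < … < d_N
    (d : ℕ → ℝ) (hd1 : 0 ≤ d 1)
    (hdinc : ∀ i, 1 ≤ i → i < N → d i < d (i + 1))
    -- demands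
    (Q : ℕ → ℕ → ℝ) (hQ : ∀ i ∈ Finset.Icc 1 N, ∀ k ∈ Finset.Icc 1 K, 0 < Q i k)
    -- group arrival windows 𝒯_(i,k) = Γ(T_(i,k)) = [t⁻_(i,k), t⁺_(i,k)] of length
    -- T_(i,k) = (Σ_(l≤k) Q_(i,l))/(μ_i − μ_(i+1)) with equal endpoint costs c̄(T_(i,k))
    (tm tp : ℕ → ℕ → ℝ) (cbar : ℕ → ℕ → ℝ)
    (hwin : ∀ i ∈ Finset.Icc 1 N, ∀ k ∈ Finset.Icc 1 K,
      tm i k ≤ tp i k ∧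
      tp i k - tm i k = (∑ l ∈ Finset.Icc 1 k, Q i l) / (μ i - μ (i + 1)) ∧
      c (tm i k) = cbar i k ∧ c (tp i k) = cbar i k)
    (W : ℕ → ℕ → Set ℝ) (hW0 : ∀ i, W i 0 = ∅)
    (hW : ∀ i ∈ Finset.Icc 1 N, ∀ k ∈ Finset.Icc 1 K, W i k = Set.Icc (tm i k) (tp i k))
    (hWT : ∀ i ∈ Finset.Icc 1 N, W i K ⊆ 𝒯)
    -- the explicit DSO equilibrium costs ρ^SO
    (ρSO : ℕ → ℕ → ℝ)
    (hρSO : ∀ i ∈ Finset.Icc 1 N, ∀ k ∈ Finset.Icc 1 K,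
      ρSO i k = (∑ l ∈ Finset.Icc k K, (β l - β (l + 1)) * cbar i l) + d i)
    -- the explicit DSO flows q^SO (all-or-nothing at rate μ_i − μ_(i+1))
    (qSO : ℕ → ℕ → ℝ → ℝ)
    (hqSO : ∀ i ∈ Finset.Icc 1 N, ∀ k ∈ Finset.Icc 1 K, ∀ t ∈ W i k \ W i (k - 1),
      qSO i k t = μ i - μ (i + 1))
    (hqSO0 : ∀ i ∈ Finset.Icc 1 N, ∀ k ∈ Finset.Icc 1 K, ∀ t,
      t ∉ W i k \ W i (k - 1) → qSO i k t = 0)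
    -- the explicit DSO prices p^SO, defined recursively on the group windows
    (pSO : ℕ → ℝ → ℝ)
    (hpSO : ∀ i ∈ Finset.Icc 1 N, ∀ k ∈ Finset.Icc 1 K, ∀ t ∈ W i k \ W i (k - 1),
      pSO i t = ρSO i k - β k * c t - d i - ∑ j ∈ Finset.Icc 1 (i - 1), pSO j t)
    (hpSO0 : ∀ i ∈ Finset.Icc 1 N, ∀ t ∉ W i K, pSO i t = 0)
    -- Assumption 1 for the explicit DSO solution: p^SO_i(t) > 0 exactly on the
    -- interior of the interval 𝒯_(i,K)
    (hA1 : ∀ i ∈ Finset.Icc 1 N, ∀ t ∈ 𝒯,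
      (0 < pSO i t ↔ t ∈ Set.Ioo (tm i K) (tp i K)))
    -- QRP condition: c is differentiable on 𝒯 and
    -- μ_(i+1)/μ_i − 1 < c′(t) < μ_i/μ_(i+1) − 1
    (hdiff : ∀ t ∈ 𝒯, DifferentiableAt ℝ c t)
    (hQRP : ∀ i, 1 ≤ i → i < N → ∀ t ∈ 𝒯,
      μ (i + 1) / μ i - 1 < deriv c t ∧ deriv c t < μ i / μ (i + 1) - 1)
    -- Assumption 2: the pricing bottleneck set is 𝒩^P = Finset.Icc iP N
    (iP : ℕ) (hiP : iP ∈ Finset.Icc 1 N)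
    -- PBP queueing delays: zero at priced bottlenecks, p^SO elsewhere
    (wP : ℕ → ℝ → ℝ)
    (hwP1 : ∀ i ∈ Finset.Icc 1 N, i ∈ Finset.Icc iP N → ∀ t, wP i t = 0)
    (hwP2 : ∀ i ∈ Finset.Icc 1 N, i ∉ Finset.Icc iP N → ∀ t, wP i t = pSO i t)
    -- PBP equilibrium costs and flows
    (ρP : ℕ → ℕ → ℝ) (hρP : ∀ i k, ρP i k = ρSO i k)
    (qP : ℕ → ℕ → ℝ → ℝ)
    (hqP : ∀ i ∈ Finset.Icc 1 N, ∀ k ∈ Finset.Icc 1 K, ∀ t ∈ W i k \ W i (k - 1),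
      qP i k t =
        μ i * deriv (fun s => s - ∑ j ∈ Finset.Icc 1 i, wP j s) t -
        μ (i + 1) * deriv (fun s => s - ∑ j ∈ Finset.Icc 1 (i + 1), wP j s) t)
    (hqP0 : ∀ i ∈ Finset.Icc 1 N, ∀ k ∈ Finset.Icc 1 K, ∀ t,
      t ∉ W i k \ W i (k - 1) → qP i k t = 0) :
    -- (i) departure-time choice complementarity with tolls at priced bottlenecks
    (∀ i ∈ Finset.Icc 1 N, ∀ k ∈ Finset.Icc 1 K,
      ∀ᵐ t ∂(MeasureTheory.volume.restrict 𝒯),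
        0 ≤ qP i k t ∧
        0 ≤ (∑ j ∈ Finset.Icc 1 i, wP j t) + β k * c t +
            (∑ j ∈ Finset.Icc iP i, pSO j t) + d i - ρP i k ∧
        qP i k t * ((∑ j ∈ Finset.Icc 1 i, wP j t) + β k * c t +
            (∑ j ∈ Finset.Icc iP i, pSO j t) + d i - ρP i k) = 0) ∧
    -- (ii) queueing complementarity at the unpriced bottlenecks
    (∀ i ∈ Finset.Icc 1 N, i ∉ Finset.Icc iP N →
      ∀ᵐ t ∂(MeasureTheory.volume.restrict 𝒯),
        0 ≤ wP i t ∧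
        0 ≤ μ i * deriv (fun s => s - ∑ j ∈ Finset.Icc 1 i, wP j s) t -
            ∑ j ∈ Finset.Icc i N, ∑ k ∈ Finset.Icc 1 K, qP j k t ∧
        wP i t * (μ i * deriv (fun s => s - ∑ j ∈ Finset.Icc 1 i, wP j s) t -
            ∑ j ∈ Finset.Icc i N, ∑ k ∈ Finset.Icc 1 K, qP j k t) = 0) ∧
    -- (iii) demand conservation
    (∀ i ∈ Finset.Icc 1 N, ∀ k ∈ Finset.Icc 1 K, ∫ t in 𝒯, qP i k t = Q i k) ∧
    -- (iv) consistency
    (∀ i ∈ Finset.Icc 1 N, ∀ᵐ t ∂(MeasureTheory.volume.restrict 𝒯),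
        0 < 1 - ∑ j ∈ Finset.Icc 1 i, deriv (wP j) t) :=
  pbp_equilibrium_general N K hK 𝒯 c hccont hcdec hcinc β hβ1 hβdec hβpos hβK1 μ hμdec hμpos hμtop d
    Q hQ tm tp cbar hwin W hW0 hW hWT ρSO hρSO pSO hpSO hpSO0 hA1 hdiff hQRP iP hiP wP hwP1 hwP2 ρP
    hρP qP hqP hqP0
end
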